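/- arXiv:1403.3777 — 9 statements merged into one kernel-verified Lean document; each statement's English description precedes it below -/
import Mathlib

section
/- Let (e_i) be a Schauder basis of a Banach space X and C ≥ 1. If (e_i) is C-greedy, then (e_i) is suppression C-unconditional, i.e., ‖Σ_{i∈A} x_i e_i‖ ≤ C‖Σ_{i∈ℕ} x_i e_i‖ for every x = Σ x_i e_i ∈ X with finite support and every A ⊂ ℕ. -/
open scoped BigOperators

section CommonDefs

variable {X : Type*} [NormedAddCommGroup X] [NormedSpace ℝ X]

/-- `(e, coord)` is a Schauder basis of `X` with biorthogonal functionals `coord`: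
the functionals are biorthogonal to the basis vectors and every `x` is the limit of the
partial sums of its expansion `Σ coord i x • e i`. -/
structure IsSchauderBasis (e : ℕ → X) (coord : ℕ → X →L[ℝ] ℝ) : Prop where
  biorth : ∀ i j, coord i (e j) = if i = j then 1 else 0
  expansion : ∀ x : X,
    Filter.Tendsto (fun n => ∑ i ∈ Finset.range n, coord i x • e i)
      Filter.atTop (nhds x)

/-- The best `m`-term approximation error `σ_m(x)` w.r.t. the norm `nn`. -/
noncomputable def bestApprox (e : ℕ → X) (nn : X → ℝ) (m : ℕ) (x : X) : ℝ :=
  sInf { r | ∃ (A : Finset ℕ) (a : ℕ → ℝ), A.card ≤ m ∧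
    r = nn (x - ∑ i ∈ A, a i • e i) }

/-- `A` is a set of coordinates of `x` of largest modulus (a greedy set):
the `m`-th greedy approximant of `x` is `∑ i ∈ A, coord i x • e i` for a greedy set of
cardinality `m`. -/
def GreedySet (coord : ℕ → X →L[ℝ] ℝ) (x : X) (A : Finset ℕ) : Prop :=
  ∀ i ∈ A, ∀ j ∉ A, |coord j x| ≤ |coord i x|

/-- The basis `(e, coord)` is `C`-greedy w.r.t. the norm `nn`:
`‖x - G_m(x)‖ ≤ C σ_m(x)` for every `x` and `m` (for any choice of `m`-th greedy
approximant `G_m(x)`). -/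
def IsGreedyWith (e : ℕ → X) (coord : ℕ → X →L[ℝ] ℝ) (nn : X → ℝ) (C : ℝ) : Prop :=
  ∀ (x : X) (m : ℕ) (A : Finset ℕ), A.card = m → GreedySet coord x A →
    nn (x - ∑ i ∈ A, coord i x • e i) ≤ C * bestApprox e nn m x

/-- Suppression `K`-unconditionality w.r.t. the norm `nn`. -/
def IsSuppressionUnconditionalWith (e : ℕ → X) (nn : X → ℝ) (K : ℝ) : Prop :=
  ∀ (s A : Finset ℕ) (a : ℕ → ℝ), A ⊆ s →
    nn (∑ i ∈ A, a i • e i) ≤ K * nn (∑ i ∈ s, a i • e i)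

/-- `K`-unconditionality w.r.t. the norm `nn`. -/
def IsUnconditionalWith (e : ℕ → X) (nn : X → ℝ) (K : ℝ) : Prop :=
  ∀ (s : Finset ℕ) (a b : ℕ → ℝ), (∀ i, |a i| ≤ |b i|) →
    nn (∑ i ∈ s, a i • e i) ≤ K * nn (∑ i ∈ s, b i • e i)

/-- `Δ`-democracy w.r.t. the norm `nn`. -/
def IsDemocraticWith (e : ℕ → X) (nn : X → ℝ) (Δ : ℝ) : Prop :=
  ∀ A B : Finset ℕ, A.card ≤ B.card →
    nn (∑ i ∈ A, e i) ≤ Δ * nn (∑ i ∈ B, e i)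

/-- The basis is normalized w.r.t. the norm `nn`. -/
def IsNormalizedWith (e : ℕ → X) (nn : X → ℝ) : Prop :=
  ∀ i, nn (e i) = 1

/-- The basis is seminormalized. -/
def IsSeminormalized (e : ℕ → X) : Prop :=
  ∃ c C : ℝ, 0 < c ∧ ∀ i, c ≤ ‖e i‖ ∧ ‖e i‖ ≤ C

/-- The fundamental function `φ(n) = sup_{|A| ≤ n} ‖Σ_{i∈A} e_i‖` w.r.t. the norm `nn`. -/
noncomputable def fundFn (e : ℕ → X) (nn : X → ℝ) (n : ℕ) : ℝ :=
  sSup { r | ∃ A : Finset ℕ, A.card ≤ n ∧ r = nn (∑ i ∈ A, e i) }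

/-- The dual norm (w.r.t. `nn`) of `∑_{i∈A} e_i^*`. -/
noncomputable def dualNormFinset (coord : ℕ → X →L[ℝ] ℝ) (nn : X → ℝ) (A : Finset ℕ) : ℝ :=
  sSup { r | ∃ x : X, nn x ≤ 1 ∧ r = |∑ i ∈ A, coord i x| }

/-- The dual fundamental function `φ*(n) = sup_{|A| ≤ n} ‖Σ_{i∈A} e_i^*‖*` w.r.t. `nn`. -/
noncomputable def dualFundFn (coord : ℕ → X →L[ℝ] ℝ) (nn : X → ℝ) (n : ℕ) : ℝ :=
  sSup { r | ∃ A : Finset ℕ, A.card ≤ n ∧ r = dualNormFinset coord nn A }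

/-- `Δ`-bidemocracy w.r.t. the norm `nn`: `φ(n) φ*(n) ≤ Δ n` for all `n`. -/
def IsBidemocraticWith (e : ℕ → X) (coord : ℕ → X →L[ℝ] ℝ) (nn : X → ℝ) (Δ : ℝ) : Prop :=
  ∀ n : ℕ, fundFn e nn n * dualFundFn coord nn n ≤ Δ * n

/-- `nn` is a norm on `X` equivalent to the original norm. -/
def IsEquivNorm (nn : X → ℝ) : Prop :=
  (∀ x y : X, nn (x + y) ≤ nn x + nn y) ∧
  (∀ (a : ℝ) (x : X), nn (a • x) = |a| * nn x) ∧
  ∃ c C : ℝ, 0 < c ∧ ∀ x : X, c * ‖x‖ ≤ nn x ∧ nn x ≤ C * ‖x‖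

/-- The (finitely supported) vector `Σ_i f i • e i` with coefficients `f ∈ c₀₀`. -/
noncomputable def finVec (e : ℕ → X) (f : ℕ →₀ ℝ) : X :=
  f.sum fun i c => c • e i

/-- `y = w + t` is a greedy rearrangement of `x = w + u`: the coefficient sequences
`w, u, t` have pairwise disjoint supports, `|supp u| = |supp t|`, and
`‖w‖_∞ ≤ |u_i| = |t_j|` for all `i ∈ supp u`, `j ∈ supp t`. -/
def IsGreedyRearrangement (w u t : ℕ →₀ ℝ) : Prop :=
  Disjoint w.support u.support ∧ Disjoint w.support t.support ∧
  Disjoint u.support t.support ∧ u.support.card = t.support.card ∧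
  (∀ i ∈ u.support, ∀ j ∈ t.support, |u i| = |t j|) ∧
  (∀ n : ℕ, ∀ i ∈ u.support, |w n| ≤ |u i|)

end CommonDefs

section FundDefs

/-- A fundamental (quasi-concave) function on `[1, ∞)`: positive, increasing, and
`x ↦ φ(x)/x` is decreasing. -/
def IsFundamentalFunction (φ : ℝ → ℝ) : Prop :=
  (∀ x : ℝ, 1 ≤ x → 0 < φ x) ∧
  (∀ x y : ℝ, 1 ≤ x → x ≤ y → φ x ≤ φ y) ∧
  (∀ x y : ℝ, 1 ≤ x → x ≤ y → φ y / y ≤ φ x / x)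

/-- `δ_φ(y) = liminf_{x→∞} φ(yx)/(y φ(x))`. -/
noncomputable def deltaFn (φ : ℝ → ℝ) (y : ℝ) : ℝ :=
  Filter.liminf (fun x : ℝ => φ (y * x) / (y * φ x)) Filter.atTop

/-- `δ(φ) = inf_{y ≥ 1} δ_φ(y)`. -/
noncomputable def deltaParam (φ : ℝ → ℝ) : ℝ :=
  sInf { d | ∃ y : ℝ, 1 ≤ y ∧ d = deltaFn φ y }

/-- Equivalence of fundamental functions. -/
def FundEquiv (φ ψ : ℝ → ℝ) : Prop :=
  ∃ a b : ℝ, 0 < a ∧ 0 < b ∧ ∀ x : ℝ, 1 ≤ x → a * φ x ≤ ψ x ∧ ψ x ≤ b * φ x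

end FundDefs

/-- a `C`-greedy Schauder basis of a Banach space is suppression
`C`-unconditional. -/
theorem greedy_implies_suppression_unconditional
    {X : Type*} [NormedAddCommGroup X] [NormedSpace ℝ X] [CompleteSpace X]
    (e : ℕ → X) (coord : ℕ → X →L[ℝ] ℝ) (C : ℝ) (hC : 1 ≤ C)
    (hbasis : IsSchauderBasis e coord)
    (hgreedy : IsGreedyWith e coord (fun x => ‖x‖) C) :
    ∀ (s A : Finset ℕ) (a : ℕ → ℝ), A ⊆ s →
      ‖∑ i ∈ A, a i • e i‖ ≤ C * ‖∑ i ∈ s, a i • e i‖ := by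
  intro s A a hAs
  set t : ℝ := (∑ i ∈ s, |a i|) + 1 with ht
  have ht0 : 0 ≤ t := by positivity
  have hta : ∀ j ∈ s, |a j| ≤ t := by
    intro j hj
    have h1 : |a j| ≤ ∑ i ∈ s, |a i| :=
      Finset.single_le_sum (f := fun i => |a i|) (fun i _ => abs_nonneg _) hj
    linarith
  set b : ℕ → ℝ := fun i => if i ∈ A then a i else t with hb
  set B : Finset ℕ := s \ A with hB
  set y : X := ∑ i ∈ s, b i • e i with hy
  -- coordinates of y
  have hcoord : ∀ j, coord j y = if j ∈ s then b j else 0 := by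
    intro j
    rw [hy, map_sum]
    have : ∀ i ∈ s, coord j (b i • e i) = if i = j then b i else 0 := by
      intro i _
      rw [map_smul, hbasis.biorth]
      by_cases h : j = i <;> simp [h, eq_comm]
    rw [Finset.sum_congr rfl this, Finset.sum_ite_eq']
  -- B is a greedy set of y
  have hgs : GreedySet coord y B := by
    intro i hi j hj
    have hiB : i ∈ s \ A := hi
    have hcoord_i : coord i y = t := by
      rw [hcoord]
      simp [Finset.mem_sdiff.mp hiB |>.1, hb, Finset.mem_sdiff.mp hiB |>.2]
    rw [hcoord_i, abs_of_nonneg ht0, hcoord j]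
    by_cases hjs : j ∈ s
    · have hjA : j ∈ A := by
        by_contra hjA
        exact hj (Finset.mem_sdiff.mpr ⟨hjs, hjA⟩)
      simp only [hjs, if_true, hb, hjA]
      exact hta j hjs
    · simpa [hjs] using ht0
  -- y minus its greedy approximant is ∑ A
  have hsplit : y = (∑ i ∈ A, a i • e i) + ∑ i ∈ B, t • e i := by
    have h1 : ∀ i ∈ A, b i • e i = a i • e i := fun i hi => by simp [hb, hi]
    have h2 : ∀ i ∈ B, b i • e i = t • e i := fun i hi => by
      simp [hb, (Finset.mem_sdiff.mp hi).2]
    rw [hy, ← Finset.sum_sdiff hAs, Finset.sum_congr rfl h2, add_comm,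
        Finset.sum_congr rfl h1]
  have hdiff : y - ∑ i ∈ B, coord i y • e i = ∑ i ∈ A, a i • e i := by
    have : ∀ i ∈ B, coord i y • e i = t • e i := by
      intro i hi
      have hi' := Finset.mem_sdiff.mp hi
      rw [hcoord]
      simp [hi'.1, hb, hi'.2]
    rw [Finset.sum_congr rfl this, hsplit]
    abel
  -- best approximation bound: σ_{|B|}(y) ≤ ‖x‖
  have hba : bestApprox e (fun x => ‖x‖) B.card y ≤ ‖∑ i ∈ s, a i • e i‖ := by
    apply csInf_le
    · refine ⟨0, ?_⟩
      rintro r ⟨A', a', _, rfl⟩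
      exact norm_nonneg _
    · refine ⟨B, fun i => t - a i, le_refl _, ?_⟩
      congr 1
      have hsum : ∑ i ∈ B, (t - a i) • e i = (∑ i ∈ B, t • e i) - ∑ i ∈ B, a i • e i := by
        rw [← Finset.sum_sub_distrib]
        apply Finset.sum_congr rfl
        intro i _
        rw [sub_smul]
      have hx : (∑ i ∈ s, a i • e i) = (∑ i ∈ A, a i • e i) + ∑ i ∈ B, a i • e i := by
        rw [hB, ← Finset.sum_sdiff hAs]
        abel
      rw [hsum, hsplit, hx]
      abel
  have := hgreedy y B.card B rfl hgs
  rw [hdiff] at this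
  calc ‖∑ i ∈ A, a i • e i‖ ≤ C * bestApprox e (fun x => ‖x‖) B.card y := this
    _ ≤ C * ‖∑ i ∈ s, a i • e i‖ := by
        apply mul_le_mul_of_nonneg_left hba (by linarith)
end

section
/- Let (e_i) be a Schauder basis of a Banach space X and C ≥ 1. If (e_i) is C-greedy, then (e_i) has Property (A) with constant C, i.e., ‖y‖ ≤ C‖x‖ whenever x, y are finitely supported vectors and y is a greedy rearrangement of x. -/
open scoped BigOperators

section Aux

variable {X : Type*} [NormedAddCommGroup X] [NormedSpace ℝ X]

lemma finVec_add (e : ℕ → X) (f g : ℕ →₀ ℝ) :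
    finVec e (f + g) = finVec e f + finVec e g := by
  unfold finVec
  exact Finsupp.sum_add_index' (fun i => zero_smul ℝ (e i))
    (fun i a b => add_smul a b (e i))

lemma coord_finVec {e : ℕ → X} {coord : ℕ → X →L[ℝ] ℝ}
    (hbasis : IsSchauderBasis e coord) (f : ℕ →₀ ℝ) (j : ℕ) :
    coord j (finVec e f) = f j := by
  unfold finVec Finsupp.sum
  rw [map_sum]
  have : ∀ i ∈ f.support, coord j (f i • e i) = if j = i then f i else 0 := by
    intro i _
    rw [map_smul, hbasis.biorth j i]
    by_cases h : j = i <;> simp [h]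
  rw [Finset.sum_congr rfl this, Finset.sum_ite_eq f.support j f]
  by_cases h : j ∈ f.support
  · simp [h]
  · simp [h, Finsupp.notMem_support_iff.mp h]

end Aux

/-- a `C`-greedy Schauder basis of a Banach space has Property (A) with
constant `C`: `‖y‖ ≤ C ‖x‖` whenever `y = w + t` is a greedy rearrangement of
`x = w + u`. -/
theorem greedy_implies_propertyA
    {X : Type*} [NormedAddCommGroup X] [NormedSpace ℝ X] [CompleteSpace X]
    (e : ℕ → X) (coord : ℕ → X →L[ℝ] ℝ) (C : ℝ) (hC : 1 ≤ C)
    (hbasis : IsSchauderBasis e coord)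
    (hgreedy : IsGreedyWith e coord (fun x => ‖x‖) C) :
    ∀ w u t : ℕ →₀ ℝ, IsGreedyRearrangement w u t →
      ‖finVec e (w + t)‖ ≤ C * ‖finVec e (w + u)‖ := by
  intro w u t h
  obtain ⟨hwu, hwt, hut, hcard, heq, hle⟩ := h
  set f : ℕ →₀ ℝ := w + u + t with hf
  have hcoord : ∀ j, coord j (finVec e f) = f j := coord_finVec hbasis f
  -- value of f on various supports
  have hfu : ∀ i ∈ u.support, f i = u i := by
    intro i hi
    have hw : w i = 0 := Finsupp.notMem_support_iff.mp (Finset.disjoint_right.mp hwu hi)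
    have ht : t i = 0 := Finsupp.notMem_support_iff.mp (Finset.disjoint_left.mp hut hi)
    simp [hf, hw, ht]
  have hgs : GreedySet coord (finVec e f) u.support := by
    intro i hi j hj
    rw [hcoord, hcoord, hfu i hi]
    by_cases hjt : j ∈ t.support
    · have hw : w j = 0 := Finsupp.notMem_support_iff.mp (Finset.disjoint_right.mp hwt hjt)
      have hu : u j = 0 := Finsupp.notMem_support_iff.mp hj
      have : f j = t j := by simp [hf, hw, hu]
      rw [this, (heq i hi j hjt).symm]
    · have hu : u j = 0 := Finsupp.notMem_support_iff.mp hj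
      have ht : t j = 0 := Finsupp.notMem_support_iff.mp hjt
      have : f j = w j := by simp [hf, hu, ht]
      rw [this]
      exact hle j i hi
  have hG := hgreedy (finVec e f) u.support.card u.support rfl hgs
  -- the greedy remainder is finVec e (w + t)
  have hsum_u : ∑ i ∈ u.support, coord i (finVec e f) • e i = finVec e u := by
    rw [Finset.sum_congr rfl fun i hi => by rw [hcoord i, hfu i hi]]
    rfl
  have hrem : finVec e f - ∑ i ∈ u.support, coord i (finVec e f) • e i
      = finVec e (w + t) := by
    rw [hsum_u]
    have : f = (w + t) + u := by rw [hf]; abel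
    rw [this, finVec_add]
    abel
  rw [hrem] at hG
  -- bestApprox ≤ ‖finVec e (w+u)‖ via A = t.support, a = t
  have hsum_t : ∑ i ∈ t.support, t i • e i = finVec e t := rfl
  have hmem : ‖finVec e (w + u)‖ ∈ { r | ∃ (A : Finset ℕ) (a : ℕ → ℝ),
      A.card ≤ u.support.card ∧ r = ‖finVec e f - ∑ i ∈ A, a i • e i‖ } := by
    refine ⟨t.support, fun i => t i, le_of_eq hcard.symm, ?_⟩
    have hfv : finVec e f = finVec e (w + u) + finVec e t := by rw [hf, finVec_add]
    rw [hsum_t, hfv, add_sub_cancel_right]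
  have hbdd : BddBelow { r | ∃ (A : Finset ℕ) (a : ℕ → ℝ),
      A.card ≤ u.support.card ∧ r = ‖finVec e f - ∑ i ∈ A, a i • e i‖ } := by
    refine ⟨0, fun r hr => ?_⟩
    obtain ⟨A, a, _, hr⟩ := hr
    rw [hr]; exact norm_nonneg _
  have hba : bestApprox e (fun x => ‖x‖) u.support.card (finVec e f)
      ≤ ‖finVec e (w + u)‖ := csInf_le hbdd hmem
  calc ‖finVec e (w + t)‖ ≤ C * bestApprox e (fun x => ‖x‖) u.support.card (finVec e f) := hG
    _ ≤ C * ‖finVec e (w + u)‖ :=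
      mul_le_mul_of_nonneg_left hba (le_trans zero_le_one hC)
end

section
/- Let (e_i) be a Schauder basis of a Banach space X which is suppression K_S-unconditional, K_U-unconditional and Δ-democratic. Then (e_i) is C-greedy with C ≤ K_S + K_U²·Δ. -/
open scoped BigOperators

/-- a suppression `K_S`-unconditional, `K_U`-unconditional and
`Δ`-democratic Schauder basis of a Banach space is `C`-greedy with
`C ≤ K_S + K_U² ⬝ Δ`. -/
theorem unconditional_democratic_implies_greedy
    {X : Type*} [NormedAddCommGroup X] [NormedSpace ℝ X] [CompleteSpace X]
    (e : ℕ → X) (coord : ℕ → X →L[ℝ] ℝ) (KS KU Δ : ℝ)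
    (hKS : 1 ≤ KS) (hKU : 1 ≤ KU) (hΔ : 1 ≤ Δ)
    (hbasis : IsSchauderBasis e coord)
    (hsupp : IsSuppressionUnconditionalWith e (fun x => ‖x‖) KS)
    (huncond : IsUnconditionalWith e (fun x => ‖x‖) KU)
    (hdem : IsDemocraticWith e (fun x => ‖x‖) Δ) :
    IsGreedyWith e coord (fun x => ‖x‖) (KS + KU ^ 2 * Δ) := by
  intro x m A hcard hgA
  have hKS0 : (0:ℝ) < KS := lt_of_lt_of_le one_pos hKS
  have hKU0 : (0:ℝ) < KU := lt_of_lt_of_le one_pos hKU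
  have hΔ0 : (0:ℝ) < Δ := lt_of_lt_of_le one_pos hΔ
  have hC0 : (0:ℝ) < KS + KU ^ 2 * Δ := by positivity
  have key : ∀ (B : Finset ℕ) (a : ℕ → ℝ), B.card ≤ m →
      ‖x - ∑ i ∈ A, coord i x • e i‖ ≤ (KS + KU ^ 2 * Δ) * ‖x - ∑ i ∈ B, a i • e i‖ := by
    intro B a hB
    set y : X := ∑ i ∈ B, a i • e i with hy
    set z : X := x - y with hzdef
    have hcoordy : ∀ j, coord j y = if j ∈ B then a j else 0 := by
      intro j
      simp [hy, map_sum, map_smul, smul_eq_mul, hbasis.biorth, mul_ite, mul_one, mul_zero,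
        Finset.sum_ite_eq]
    have hPy : ∑ i ∈ A ∪ B, coord i y • e i = y := by
      simp only [hcoordy, ite_smul, zero_smul]
      rw [Finset.sum_ite_mem, Finset.union_inter_cancel_right, hy]
    have hcoordz : ∀ j, coord j z = coord j x - coord j y := fun j => by
      rw [hzdef, map_sub]
    have hzsum : ∀ S : Finset ℕ, ∑ i ∈ S, coord i z • e i
        = ∑ i ∈ S, coord i x • e i - ∑ i ∈ S, coord i y • e i := by
      intro S
      simp [hcoordz, sub_smul, Finset.sum_sub_distrib]
    have hlim : ∀ S : Finset ℕ,
        Filter.Tendsto (fun n => ∑ i ∈ Finset.range n \ S, coord i z • e i)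
          Filter.atTop (nhds (z - ∑ i ∈ S, coord i z • e i)) := by
      intro S
      have h1 : Filter.Tendsto (fun n => (∑ i ∈ Finset.range n, coord i z • e i)
            - ∑ i ∈ S, coord i z • e i) Filter.atTop
            (nhds (z - ∑ i ∈ S, coord i z • e i)) :=
        (hbasis.expansion z).sub tendsto_const_nhds
      refine Filter.Tendsto.congr' ?_ h1
      obtain ⟨n₀, hn₀⟩ := S.exists_nat_subset_range
      filter_upwards [Filter.eventually_ge_atTop n₀] with n hn
      rw [Finset.sum_sdiff_eq_sub (hn₀.trans (Finset.range_subset_range.2 hn))]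
    have h1 : ‖z - ∑ i ∈ A ∪ B, coord i z • e i‖ ≤ KS * ‖z‖ := by
      refine le_of_tendsto_of_tendsto ((hlim (A ∪ B)).norm)
        (((hbasis.expansion z).norm).const_mul KS) ?_
      exact Filter.Eventually.of_forall fun n =>
        hsupp (Finset.range n) (Finset.range n \ (A ∪ B)) (fun i => coord i z)
          Finset.sdiff_subset
    have hsplit : ∑ i ∈ A ∪ B, coord i x • e i
        = ∑ i ∈ A, coord i x • e i + ∑ i ∈ B \ A, coord i x • e i := by
      rw [← Finset.sum_union Finset.disjoint_sdiff, Finset.union_sdiff_self_eq_union]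
    have hid : x - ∑ i ∈ A, coord i x • e i
        = (z - ∑ i ∈ A ∪ B, coord i z • e i) + ∑ i ∈ B \ A, coord i x • e i := by
      rw [hzsum, hPy, hsplit, hzdef]
      abel
    have hcards : (B \ A).card ≤ (A \ B).card := by
      have e1 := Finset.card_sdiff_add_card_inter B A
      have e2 := Finset.card_sdiff_add_card_inter A B
      have e3 : (B ∩ A).card = (A ∩ B).card := by rw [Finset.inter_comm]
      omega
    have h2 : ‖∑ i ∈ B \ A, coord i x • e i‖ ≤ KU ^ 2 * Δ * ‖z‖ := by
      rcases Finset.eq_empty_or_nonempty (B \ A) with hBA | hBA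
      · rw [hBA, Finset.sum_empty, norm_zero]
        positivity
      · have hAB : (A \ B).Nonempty := by
          rw [← Finset.card_pos] at hBA ⊢
          omega
        set β : ℝ := (A \ B).inf' hAB fun j => |coord j x| with hβ
        have hβ0 : 0 ≤ β := by
          rw [hβ]
          exact Finset.le_inf' hAB _ fun b _ => abs_nonneg _
        have ha : ‖∑ i ∈ B \ A, coord i x • e i‖ ≤ KU * (β * ‖∑ i ∈ B \ A, e i‖) := by
          have hcond : ∀ i, |if i ∈ B \ A then coord i x else 0| ≤ |(fun _ : ℕ => β) i| := by
            intro i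
            simp only
            rw [abs_of_nonneg hβ0]
            split
            · next hi =>
              have hiA : i ∉ A := (Finset.mem_sdiff.1 hi).2
              rw [hβ]
              exact Finset.le_inf' hAB _ fun j hj =>
                hgA j (Finset.mem_sdiff.1 hj).1 i hiA
            · simpa using hβ0
          have h := huncond (B \ A) (fun i => if i ∈ B \ A then coord i x else 0)
            (fun _ => β) hcond
          calc ‖∑ i ∈ B \ A, coord i x • e i‖
              = ‖∑ i ∈ B \ A, (if i ∈ B \ A then coord i x else 0) • e i‖ := by
                congr 1
                refine Finset.sum_congr rfl fun i hi => ?_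
                rw [if_pos hi]
            _ ≤ KU * ‖∑ i ∈ B \ A, β • e i‖ := h
            _ = KU * (β * ‖∑ i ∈ B \ A, e i‖) := by
                rw [← Finset.smul_sum]
                rw [norm_smul, Real.norm_eq_abs, abs_of_nonneg hβ0]
        have hb : ‖∑ i ∈ B \ A, e i‖ ≤ Δ * ‖∑ i ∈ A \ B, e i‖ := hdem _ _ hcards
        have hc : β * ‖∑ i ∈ A \ B, e i‖ ≤ KU * ‖z‖ := by
          refine ge_of_tendsto (((hbasis.expansion z).norm).const_mul KU) ?_
          obtain ⟨n₀, hn₀⟩ := (A \ B).exists_nat_subset_range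
          filter_upwards [Filter.eventually_ge_atTop n₀] with n hn
          have hsub : A \ B ⊆ Finset.range n := hn₀.trans (Finset.range_subset_range.2 hn)
          have hcond : ∀ i, |if i ∈ A \ B then β else 0| ≤ |(fun i => coord i z) i| := by
            intro i
            simp only
            split
            · next hi =>
              have hiB : i ∉ B := (Finset.mem_sdiff.1 hi).2
              have hzx : coord i z = coord i x := by
                rw [hcoordz, hcoordy, if_neg hiB, sub_zero]
              rw [hzx, abs_of_nonneg hβ0, hβ]
              exact Finset.inf'_le _ hi
            · simpa using abs_nonneg _
          have h := huncond (Finset.range n) (fun i => if i ∈ A \ B then β else 0)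
            (fun i => coord i z) hcond
          have heq : ∑ i ∈ Finset.range n, (if i ∈ A \ B then β else 0) • e i
              = β • ∑ i ∈ A \ B, e i := by
            simp only [ite_smul, zero_smul]
            rw [Finset.sum_ite_mem, Finset.inter_eq_right.2 hsub, Finset.smul_sum]
          rw [heq] at h
          simp only [norm_smul, Real.norm_eq_abs, abs_of_nonneg hβ0] at h
          exact h
        calc ‖∑ i ∈ B \ A, coord i x • e i‖
            ≤ KU * (β * ‖∑ i ∈ B \ A, e i‖) := ha
          _ ≤ KU * (β * (Δ * ‖∑ i ∈ A \ B, e i‖)) := by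
              refine mul_le_mul_of_nonneg_left (mul_le_mul_of_nonneg_left hb hβ0) hKU0.le
          _ = KU * Δ * (β * ‖∑ i ∈ A \ B, e i‖) := by ring
          _ ≤ KU * Δ * (KU * ‖z‖) := by
              exact mul_le_mul_of_nonneg_left hc (by positivity)
          _ = KU ^ 2 * Δ * ‖z‖ := by ring
    calc ‖x - ∑ i ∈ A, coord i x • e i‖
        = ‖(z - ∑ i ∈ A ∪ B, coord i z • e i) + ∑ i ∈ B \ A, coord i x • e i‖ := by
          rw [hid]
      _ ≤ ‖z - ∑ i ∈ A ∪ B, coord i z • e i‖ + ‖∑ i ∈ B \ A, coord i x • e i‖ :=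
          norm_add_le _ _
      _ ≤ KS * ‖z‖ + KU ^ 2 * Δ * ‖z‖ := add_le_add h1 h2
      _ = (KS + KU ^ 2 * Δ) * ‖z‖ := by ring
  have hne : { r | ∃ (Bf : Finset ℕ) (a : ℕ → ℝ), Bf.card ≤ m ∧
      r = ‖x - ∑ i ∈ Bf, a i • e i‖ }.Nonempty :=
    ⟨‖x - ∑ i ∈ (∅ : Finset ℕ), (fun _ : ℕ => (0:ℝ)) i • e i‖, ∅, fun _ => 0, by simp, rfl⟩
  have hmain : ‖x - ∑ i ∈ A, coord i x • e i‖ / (KS + KU ^ 2 * Δ)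
      ≤ bestApprox e (fun x => ‖x‖) m x := by
    refine le_csInf hne ?_
    rintro r ⟨Bf, a, hBf, rfl⟩
    rw [div_le_iff₀ hC0]
    calc ‖x - ∑ i ∈ A, coord i x • e i‖
        ≤ (KS + KU ^ 2 * Δ) * ‖x - ∑ i ∈ Bf, a i • e i‖ := key Bf a hBf
      _ = ‖x - ∑ i ∈ Bf, a i • e i‖ * (KS + KU ^ 2 * Δ) := by ring
  rw [div_le_iff₀ hC0] at hmain
  calc ‖x - ∑ i ∈ A, coord i x • e i‖
      ≤ bestApprox e (fun x => ‖x‖) m x * (KS + KU ^ 2 * Δ) := hmain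
    _ = (KS + KU ^ 2 * Δ) * bestApprox e (fun x => ‖x‖) m x := by ring
end

section
/- Let (e_i) be a 1-unconditional and Δ-bidemocratic basis of a Banach space X with fundamental function φ. Then |||x||| = max{ ‖x‖, sup_{A ⊂ ℕ finite} (φ(|A|)/|A|) Σ_{i∈A} |e_i^*(x)| } defines an equivalent norm on X, and with respect to |||·||| the basis (e_i) is 1-unconditional and 1-bidemocratic; in particular (e_i) and (e_i^*) are 1-democratic and (e_i) is 2-greedy. -/
/-!
Each average `(φ(|A|)/|A|) Σ_{i∈A} |e_i^*(x)|` is at most `2Δ‖x‖`: split `A` by the signs of the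
coefficients and use `φ(n) φ*(n) ≤ Δ n`. Hence `|||·|||` is an equivalent norm, and it is
`1`-unconditional because both of its parts are. Quasi-concavity of `φ` (`φ(n)/n` decreases, by
averaging over subsets) gives `|||Σ_{i∈A} e_i||| = φ(|A|)`, and testing against
`φ(|A|)⁻¹ Σ_{i∈A} e_i` gives `|||Σ_{i∈A} e_i^*|||_* = |A|/φ(|A|)`; both are monotone in `|A|`
and their product is `|A|`.

For greediness, let `A` be a greedy set and `z` be supported on `B` with `|B| ≤ |A|`. Then
`x - G(x) = (x - P_{A∪B} x) + P_{B∖A} x`; the first term is a coordinate projection of `x - z`,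
and the second is bounded by the average of `x - z` over `A ∖ B`.
-/

open scoped BigOperators

open Finset Filter Topology

theorem Finset.sum_powersetCard_sum {α M : Type*} [DecidableEq α] [AddCommMonoid M]
    (A : Finset α) {k : ℕ} (hk : 0 < k) (f : α → M) :
    ∑ B ∈ A.powersetCard k, ∑ j ∈ B, f j = (A.card - 1).choose (k - 1) • ∑ j ∈ A, f j := by
  rw [sum_comm' (t' := A) (s' := fun j => (A.powersetCard k).filter ({j} ⊆ ·)), smul_sum]
  · refine sum_congr rfl fun j hj => ?_
    rw [sum_const, card_filter_powersetCard_subset _ _ _ (singleton_subset_iff.2 hj)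
      (by rw [card_singleton]; exact hk), card_singleton]
  · intro B j
    simp only [mem_powersetCard, mem_filter, singleton_subset_iff]
    exact (and_iff_left_of_imp fun h => h.1.1 h.2).symm

section FundamentalFunction

variable {X : Type*} [NormedAddCommGroup X] {e : ℕ → X}

theorem IsSeminormalized.exists_norm_le (hsemi : IsSeminormalized e) :
    ∃ C, ∀ i, ‖e i‖ ≤ C :=
  let ⟨_, C, _, h⟩ := hsemi; ⟨C, fun i => (h i).2⟩

theorem IsSeminormalized.exists_le_norm (hsemi : IsSeminormalized e) :
    ∃ c, 0 < c ∧ ∀ i, c ≤ ‖e i‖ :=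
  let ⟨c, _, hc, h⟩ := hsemi; ⟨c, hc, fun i => (h i).1⟩

theorem fundFn_le {nn : X → ℝ} {n : ℕ} {b : ℝ}
    (h : ∀ A : Finset ℕ, A.card ≤ n → nn (∑ i ∈ A, e i) ≤ b) : fundFn e nn n ≤ b :=
  csSup_le ⟨_, ∅, Nat.zero_le n, rfl⟩ (by rintro _ ⟨A, hA, rfl⟩; exact h A hA)

theorem fundFn_nonneg (e : ℕ → X) (n : ℕ) : 0 ≤ fundFn e (‖·‖) n :=
  Real.sSup_nonneg (by rintro _ ⟨A, -, rfl⟩; exact norm_nonneg _)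

theorem fundFn_zero (e : ℕ → X) : fundFn e (‖·‖) 0 = 0 :=
  (fundFn_le fun A hA => by simp [card_eq_zero.1 (Nat.le_zero.1 hA)]).antisymm
    (fundFn_nonneg e 0)

variable {C : ℝ}

theorem bddAbove_fundFn_set (hC : ∀ i, ‖e i‖ ≤ C) (n : ℕ) :
    BddAbove { r | ∃ A : Finset ℕ, A.card ≤ n ∧ r = ‖∑ i ∈ A, e i‖ } := by
  have hC0 : 0 ≤ C := (norm_nonneg _).trans (hC 0)
  refine ⟨n * C, ?_⟩
  rintro _ ⟨A, hA, rfl⟩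
  calc ‖∑ i ∈ A, e i‖ ≤ ∑ i ∈ A, ‖e i‖ := norm_sum_le _ _
    _ ≤ A.card * C := by simpa using sum_le_card_nsmul A _ C fun i _ => hC i
    _ ≤ n * C := by gcongr

theorem norm_sum_le_fundFn (hC : ∀ i, ‖e i‖ ≤ C) {A : Finset ℕ} {n : ℕ} (hA : A.card ≤ n) :
    ‖∑ i ∈ A, e i‖ ≤ fundFn e (‖·‖) n :=
  le_csSup (bddAbove_fundFn_set hC n) ⟨A, hA, rfl⟩

theorem fundFn_mono (hC : ∀ i, ‖e i‖ ≤ C) : Monotone (fundFn e (‖·‖)) := fun _ _ hmn =>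
  fundFn_le fun _ hA => norm_sum_le_fundFn hC (hA.trans hmn)

theorem fundFn_pos (hsemi : IsSeminormalized e) {n : ℕ} (hn : 0 < n) :
    0 < fundFn e (‖·‖) n := by
  obtain ⟨c, hc, hce⟩ := hsemi.exists_le_norm
  obtain ⟨C, hC⟩ := hsemi.exists_norm_le
  calc 0 < ‖e 0‖ := hc.trans_le (hce 0)
    _ = ‖∑ i ∈ {0}, e i‖ := by rw [sum_singleton]
    _ ≤ fundFn e (‖·‖) n := norm_sum_le_fundFn hC (by rw [card_singleton]; exact hn)

/-- Averaging `∑_{i∈B} e_i` over the `k`-subsets `B ⊆ A` recovers `∑_{i∈A} e_i` up to the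
factor `C(|A|-1, k-1) = k C(|A|, k) / |A|`. -/
theorem natCast_mul_norm_sum_le [NormedSpace ℝ X] (hC : ∀ i, ‖e i‖ ≤ C) {A : Finset ℕ}
    {k : ℕ} (hk : 0 < k) (hkA : k ≤ A.card) : k * ‖∑ i ∈ A, e i‖ ≤ A.card * fundFn e (‖·‖) k := by
  have hchoose : (0 : ℝ) < A.card.choose k := by exact_mod_cast Nat.choose_pos hkA
  have hid : (k : ℝ) * A.card.choose k = A.card * (A.card - 1).choose (k - 1) := by
    have h := Nat.add_one_mul_choose_eq (A.card - 1) (k - 1)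
    rw [Nat.sub_add_cancel (hk.trans_le hkA), Nat.sub_add_cancel hk] at h
    exact_mod_cast (h.trans (mul_comm _ _)).symm
  have havg : ((A.card - 1).choose (k - 1) : ℝ) * ‖∑ i ∈ A, e i‖ ≤
      A.card.choose k * fundFn e (‖·‖) k := by
    calc ((A.card - 1).choose (k - 1) : ℝ) * ‖∑ i ∈ A, e i‖
        = ‖∑ B ∈ A.powersetCard k, ∑ j ∈ B, e j‖ := by
          rw [sum_powersetCard_sum A hk, RCLike.norm_nsmul ℝ, nsmul_eq_mul]
      _ ≤ ∑ B ∈ A.powersetCard k, ‖∑ j ∈ B, e j‖ := norm_sum_le _ _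
      _ ≤ A.card.choose k * fundFn e (‖·‖) k := by
          simpa using sum_le_card_nsmul _ _ _ fun B hB =>
            norm_sum_le_fundFn hC (mem_powersetCard.1 hB).2.le
  refine le_of_mul_le_mul_right ?_ hchoose
  calc k * ‖∑ i ∈ A, e i‖ * A.card.choose k
      = A.card * ((A.card - 1).choose (k - 1) * ‖∑ i ∈ A, e i‖) := by
        rw [mul_right_comm, hid, mul_assoc]
    _ ≤ A.card * (A.card.choose k * fundFn e (‖·‖) k) := by gcongr
    _ = A.card * fundFn e (‖·‖) k * A.card.choose k := by ring

theorem natCast_mul_fundFn_le [NormedSpace ℝ X] (hC : ∀ i, ‖e i‖ ≤ C) {k m : ℕ} (hkm : k ≤ m) :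
    k * fundFn e (‖·‖) m ≤ m * fundFn e (‖·‖) k := by
  rcases Nat.eq_zero_or_pos k with rfl | hk
  · simpa using mul_nonneg (Nat.cast_nonneg m) (fundFn_nonneg e 0)
  have hk' : (0 : ℝ) < k := by exact_mod_cast hk
  rw [← le_div_iff₀' hk']
  refine fundFn_le fun A hA => ?_
  rw [le_div_iff₀' hk']
  rcases le_total k A.card with hkA | hAk
  · exact (natCast_mul_norm_sum_le hC hk hkA).trans
      (by gcongr; exact fundFn_nonneg e k)
  · exact mul_le_mul (by exact_mod_cast hkm) (norm_sum_le_fundFn hC hAk) (norm_nonneg _)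
      (Nat.cast_nonneg m)

theorem monotone_natCast_div_fundFn [NormedSpace ℝ X] (hsemi : IsSeminormalized e) :
    Monotone fun n : ℕ => (n : ℝ) / fundFn e (‖·‖) n := by
  obtain ⟨C, hC⟩ := hsemi.exists_norm_le
  intro k m hkm
  rcases Nat.eq_zero_or_pos k with rfl | hk
  · simpa using div_nonneg (Nat.cast_nonneg m) (fundFn_nonneg e m)
  rw [div_le_div_iff₀ (fundFn_pos hsemi hk) (fundFn_pos hsemi (hk.trans_le hkm))]
  exact natCast_mul_fundFn_le hC hkm

end FundamentalFunction

section Coordinates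

variable {X : Type*} [NormedAddCommGroup X] [NormedSpace ℝ X] {e : ℕ → X}
  {coord : ℕ → X →L[ℝ] ℝ}

theorem IsSchauderBasis.coord_sum_smul (hbasis : IsSchauderBasis e coord) (s : Finset ℕ)
    (a : ℕ → ℝ) (j : ℕ) : coord j (∑ i ∈ s, a i • e i) = if j ∈ s then a j else 0 := by
  simp only [map_sum, map_smul, smul_eq_mul, hbasis.biorth, mul_ite, mul_one, mul_zero,
    sum_ite_eq]

theorem IsSchauderBasis.coord_sum (hbasis : IsSchauderBasis e coord) (s : Finset ℕ) (j : ℕ) :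
    coord j (∑ i ∈ s, e i) = if j ∈ s then 1 else 0 := by
  simpa using hbasis.coord_sum_smul s 1 j

theorem IsSchauderBasis.le_of_tendsto_sum_mul_coord_smul (hbasis : IsSchauderBasis e coord)
    {nn : X → ℝ} (hnn : Continuous nn) {K : ℝ} (hK : IsUnconditionalWith e nn K)
    {m : ℕ → ℝ} (hm : ∀ i, |m i| ≤ 1) {x y : X}
    (hy : Tendsto (fun n => ∑ i ∈ range n, (m i * coord i x) • e i) atTop (𝓝 y)) :
    nn y ≤ K * nn x :=
  le_of_tendsto_of_tendsto' ((hnn.tendsto y).comp hy)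
    (((hnn.tendsto x).comp (hbasis.expansion x)).const_mul K) fun _ =>
      hK _ _ _ fun i => by rw [abs_mul]; exact mul_le_of_le_one_left (abs_nonneg _) (hm i)

theorem IsSchauderBasis.sub_sum_coord_smul_le (hbasis : IsSchauderBasis e coord)
    {nn : X → ℝ} (hnn : Continuous nn) {K : ℝ} (hK : IsUnconditionalWith e nn K)
    (x : X) (D : Finset ℕ) : nn (x - ∑ i ∈ D, coord i x • e i) ≤ K * nn x := by
  refine hbasis.le_of_tendsto_sum_mul_coord_smul hnn hK (m := fun i => if i ∈ D then 0 else 1)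
    (fun i => by split_ifs <;> simp) (((hbasis.expansion x).sub_const _).congr' ?_)
  filter_upwards [eventually_ge_atTop (D.sup id + 1)] with n hn
  have hD : D ⊆ range n := D.subset_range_sup_succ.trans (range_subset_range.2 hn)
  have hPD : ∑ i ∈ D, coord i x • e i =
      ∑ i ∈ range n, if i ∈ D then coord i x • e i else 0 := by
    rw [sum_ite_mem, inter_eq_right.2 hD]
  rw [hPD, ← sum_sub_distrib]
  exact sum_congr rfl fun i _ => by split_ifs <;> simp

theorem IsSchauderBasis.norm_coord_smul_le (hbasis : IsSchauderBasis e coord) {K : ℝ}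
    (hK : IsUnconditionalWith e (‖·‖) K) (x : X) (i : ℕ) : ‖coord i x • e i‖ ≤ K * ‖x‖ := by
  refine hbasis.le_of_tendsto_sum_mul_coord_smul continuous_norm hK
    (m := fun j => if j = i then 1 else 0) (fun j => by split_ifs <;> simp)
    (tendsto_const_nhds.congr' ?_)
  filter_upwards [eventually_gt_atTop i] with n hn
  simp [ite_mul, ite_smul, hn]

theorem IsSchauderBasis.norm_coord_le (hbasis : IsSchauderBasis e coord) {K : ℝ}
    (hK : IsUnconditionalWith e (‖·‖) K) (hK0 : 0 ≤ K) {c : ℝ} (hc : 0 < c)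
    (hce : ∀ i, c ≤ ‖e i‖) (i : ℕ) : ‖coord i‖ ≤ K / c := by
  refine (coord i).opNorm_le_bound (by positivity) fun x => ?_
  rw [div_mul_eq_mul_div, le_div_iff₀ hc]
  calc ‖coord i x‖ * c ≤ ‖coord i x‖ * ‖e i‖ := by gcongr; exact hce i
    _ = ‖coord i x • e i‖ := (norm_smul _ _).symm
    _ ≤ K * ‖x‖ := hbasis.norm_coord_smul_le hK x i

end Coordinates

section DualNorm

variable {X : Type*} [NormedAddCommGroup X] [NormedSpace ℝ X] {coord : ℕ → X →L[ℝ] ℝ}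

theorem dualNormFinset_nonneg (coord : ℕ → X →L[ℝ] ℝ) (nn : X → ℝ) (A : Finset ℕ) :
    0 ≤ dualNormFinset coord nn A :=
  Real.sSup_nonneg (by rintro _ ⟨x, -, rfl⟩; exact abs_nonneg _)

theorem dualNormFinset_le {nn : X → ℝ} {A : Finset ℕ} {b : ℝ} (hb : 0 ≤ b)
    (h : ∀ x, nn x ≤ 1 → |∑ i ∈ A, coord i x| ≤ b) : dualNormFinset coord nn A ≤ b :=
  Real.sSup_le (by rintro _ ⟨x, hx, rfl⟩; exact h x hx) hb

variable {M : ℝ}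

theorem abs_sum_coord_le (hM : ∀ i, ‖coord i‖ ≤ M) (A : Finset ℕ) (x : X) :
    |∑ i ∈ A, coord i x| ≤ A.card * M * ‖x‖ := by
  calc |∑ i ∈ A, coord i x| ≤ ∑ i ∈ A, |coord i x| := abs_sum_le_sum_abs _ _
    _ ≤ ∑ i ∈ A, M * ‖x‖ := sum_le_sum fun i _ => (coord i).le_of_opNorm_le (hM i) x
    _ = A.card * M * ‖x‖ := by rw [sum_const, nsmul_eq_mul, mul_assoc]

theorem bddAbove_dualNormFinset_set (hM : ∀ i, ‖coord i‖ ≤ M) {nn : X → ℝ}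
    (hnn : ∀ x, nn x ≤ 1 → ‖x‖ ≤ 1) (A : Finset ℕ) :
    BddAbove { r | ∃ x : X, nn x ≤ 1 ∧ r = |∑ i ∈ A, coord i x| } := by
  have hM0 : 0 ≤ M := (norm_nonneg _).trans (hM 0)
  refine ⟨A.card * M, ?_⟩
  rintro _ ⟨x, hx, rfl⟩
  exact (abs_sum_coord_le hM A x).trans (mul_le_of_le_one_right (by positivity) (hnn x hx))

theorem abs_sum_coord_le_dualNormFinset (hM : ∀ i, ‖coord i‖ ≤ M) (A : Finset ℕ) (x : X) :
    |∑ i ∈ A, coord i x| ≤ dualNormFinset coord (‖·‖) A * ‖x‖ := by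
  rcases eq_or_ne x 0 with rfl | hx
  · simp
  have hx' : 0 < ‖x‖ := norm_pos_iff.2 hx
  have hunit : |∑ i ∈ A, coord i (‖x‖⁻¹ • x)| ≤ dualNormFinset coord (‖·‖) A :=
    le_csSup (bddAbove_dualNormFinset_set hM (fun _ h => h) A)
      ⟨_, by dsimp only; rw [norm_smul, norm_inv, norm_norm, inv_mul_cancel₀ hx'.ne'], rfl⟩
  simp only [map_smul, smul_eq_mul, ← mul_sum, abs_mul, abs_inv, abs_norm] at hunit
  rwa [inv_mul_le_iff₀ hx', mul_comm] at hunit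

theorem dualNormFinset_le_dualFundFn (hM : ∀ i, ‖coord i‖ ≤ M) {A : Finset ℕ} {n : ℕ}
    (hA : A.card ≤ n) : dualNormFinset coord (‖·‖) A ≤ dualFundFn coord (‖·‖) n := by
  have hM0 : 0 ≤ M := (norm_nonneg _).trans (hM 0)
  refine le_csSup ⟨n * M, ?_⟩ ⟨A, hA, rfl⟩
  rintro _ ⟨B, hB, rfl⟩
  refine dualNormFinset_le (by positivity) fun x hx => (abs_sum_coord_le hM B x).trans ?_
  calc B.card * M * ‖x‖ ≤ n * M * 1 := by gcongr
    _ = n * M := mul_one _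

/-- Splitting `A` by the sign of `e_i^*(x)` costs the factor `2`. -/
theorem sum_abs_coord_le_dualFundFn (hM : ∀ i, ‖coord i‖ ≤ M) (A : Finset ℕ) (x : X) :
    ∑ i ∈ A, |coord i x| ≤ 2 * dualFundFn coord (‖·‖) A.card * ‖x‖ := by
  have hpart : ∀ B ⊆ A, |∑ i ∈ B, coord i x| ≤ dualFundFn coord (‖·‖) A.card * ‖x‖ :=
    fun B hB => (abs_sum_coord_le_dualNormFinset hM B x).trans
      (by gcongr; exact dualNormFinset_le_dualFundFn hM (card_le_card hB))
  have hnonneg : ∑ i ∈ A with 0 ≤ coord i x, |coord i x| =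
      |∑ i ∈ A with 0 ≤ coord i x, coord i x| := by
    rw [abs_sum_of_nonneg fun i hi => (mem_filter.1 hi).2]
    exact sum_congr rfl fun i hi => abs_of_nonneg (mem_filter.1 hi).2
  have hneg : ∑ i ∈ A with ¬0 ≤ coord i x, |coord i x| =
      |∑ i ∈ A with ¬0 ≤ coord i x, coord i x| := by
    rw [← abs_neg, ← sum_neg_distrib, abs_sum_of_nonneg fun i hi =>
      neg_nonneg.2 (not_le.1 (mem_filter.1 hi).2).le]
    exact sum_congr rfl fun i hi => abs_of_neg (not_le.1 (mem_filter.1 hi).2)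
  rw [← sum_filter_add_sum_filter_not A (0 ≤ coord · x), hnonneg, hneg]
  linarith [hpart _ (filter_subset (0 ≤ coord · x) A),
    hpart _ (filter_subset (¬0 ≤ coord · x) A)]

end DualNorm

section MarcinkiewiczNorm

variable {X : Type*} [NormedAddCommGroup X] [NormedSpace ℝ X] {e : ℕ → X}
  {coord : ℕ → X →L[ℝ] ℝ}

noncomputable def coordAverage (e : ℕ → X) (coord : ℕ → X →L[ℝ] ℝ) (A : Finset ℕ) (x : X) :
    ℝ :=
  fundFn e (‖·‖) A.card / A.card * ∑ i ∈ A, |coord i x|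

/-- The norm of the coefficient sequence of `x` in the Marcinkiewicz sequence space `m(φ)`. -/
noncomputable def marcinkiewiczNorm (e : ℕ → X) (coord : ℕ → X →L[ℝ] ℝ) (x : X) : ℝ :=
  sSup { r | ∃ A : Finset ℕ, A.Nonempty ∧ r = coordAverage e coord A x }

theorem coordAverage_le {Δ M : ℝ} (hM : ∀ i, ‖coord i‖ ≤ M)
    (hbidem : IsBidemocraticWith e coord (‖·‖) Δ) (x : X) {A : Finset ℕ} (hA : A.Nonempty) :
    coordAverage e coord A x ≤ 2 * Δ * ‖x‖ := by
  have hA' : (0 : ℝ) < A.card := by exact_mod_cast hA.card_pos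
  have := fundFn_nonneg e A.card
  calc coordAverage e coord A x
      ≤ fundFn e (‖·‖) A.card / A.card * (2 * dualFundFn coord (‖·‖) A.card * ‖x‖) := by
        unfold coordAverage; gcongr; exact sum_abs_coord_le_dualFundFn hM A x
    _ = 2 * (fundFn e (‖·‖) A.card * dualFundFn coord (‖·‖) A.card) * ‖x‖ / A.card := by ring
    _ ≤ 2 * (Δ * A.card) * ‖x‖ / A.card := by gcongr 2 * ?_ * _ / _; exact hbidem A.card
    _ = 2 * Δ * ‖x‖ := by field_simp

theorem coordAverage_nonneg (A : Finset ℕ) (x : X) : 0 ≤ coordAverage e coord A x := by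
  have := fundFn_nonneg e A.card
  unfold coordAverage; positivity

theorem coordAverage_smul (A : Finset ℕ) (a : ℝ) (x : X) :
    coordAverage e coord A (a • x) = |a| * coordAverage e coord A x := by
  simp only [coordAverage, map_smul, smul_eq_mul, abs_mul, ← mul_sum]; ring

theorem marcinkiewiczNorm_le {x : X} {b : ℝ}
    (h : ∀ A : Finset ℕ, A.Nonempty → coordAverage e coord A x ≤ b) :
    marcinkiewiczNorm e coord x ≤ b :=
  csSup_le ⟨_, {0}, singleton_nonempty 0, rfl⟩ (by rintro _ ⟨A, hA, rfl⟩; exact h A hA)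

theorem marcinkiewiczNorm_nonneg (x : X) : 0 ≤ marcinkiewiczNorm e coord x :=
  Real.sSup_nonneg (by rintro _ ⟨A, -, rfl⟩; exact coordAverage_nonneg A x)

theorem marcinkiewiczNorm_zero : marcinkiewiczNorm e coord (0 : X) = 0 :=
  (marcinkiewiczNorm_le fun A _ => by simp [coordAverage]).antisymm (marcinkiewiczNorm_nonneg 0)

variable {K : ℝ} (hK : ∀ (x : X) (A : Finset ℕ), A.Nonempty → coordAverage e coord A x ≤ K * ‖x‖)
include hK

theorem coordAverage_le_marcinkiewiczNorm (x : X) {A : Finset ℕ} (hA : A.Nonempty) :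
    coordAverage e coord A x ≤ marcinkiewiczNorm e coord x :=
  le_csSup ⟨K * ‖x‖, by rintro _ ⟨B, hB, rfl⟩; exact hK x B hB⟩ ⟨A, hA, rfl⟩

theorem marcinkiewiczNorm_le_mul_norm (x : X) : marcinkiewiczNorm e coord x ≤ K * ‖x‖ :=
  marcinkiewiczNorm_le fun A hA => hK x A hA

theorem marcinkiewiczNorm_mono {x y : X} (h : ∀ i, |coord i x| ≤ |coord i y|) :
    marcinkiewiczNorm e coord x ≤ marcinkiewiczNorm e coord y :=
  marcinkiewiczNorm_le fun _ hA => le_trans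
    (mul_le_mul_of_nonneg_left (sum_le_sum fun i _ => h i)
      (div_nonneg (fundFn_nonneg e _) (Nat.cast_nonneg _)))
    (coordAverage_le_marcinkiewiczNorm hK y hA)

theorem marcinkiewiczNorm_add_le (x y : X) :
    marcinkiewiczNorm e coord (x + y) ≤ marcinkiewiczNorm e coord x + marcinkiewiczNorm e coord y :=
  marcinkiewiczNorm_le fun A hA => by
    have := fundFn_nonneg e A.card
    calc coordAverage e coord A (x + y)
        ≤ coordAverage e coord A x + coordAverage e coord A y := by
          simp only [coordAverage, ← mul_add, ← sum_add_distrib, map_add]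
          gcongr with i; exact abs_add_le _ _
      _ ≤ _ := add_le_add (coordAverage_le_marcinkiewiczNorm hK x hA)
          (coordAverage_le_marcinkiewiczNorm hK y hA)

theorem marcinkiewiczNorm_smul (a : ℝ) (x : X) :
    marcinkiewiczNorm e coord (a • x) = |a| * marcinkiewiczNorm e coord x :=
  -- `Seminorm.ofSMulLE` upgrades `S (a • x) ≤ |a| S x` to an equality.
  map_smul_eq_mul (Seminorm.ofSMulLE (marcinkiewiczNorm e coord) marcinkiewiczNorm_zero
    (marcinkiewiczNorm_add_le hK) fun a x => marcinkiewiczNorm_le fun A hA => by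
      rw [coordAverage_smul, Real.norm_eq_abs]
      exact mul_le_mul_of_nonneg_left (coordAverage_le_marcinkiewiczNorm hK x hA)
        (abs_nonneg a)) a x

end MarcinkiewiczNorm

section BidemocraticNorm

variable {X : Type*} [NormedAddCommGroup X] [NormedSpace ℝ X] {e : ℕ → X}
  {coord : ℕ → X →L[ℝ] ℝ}

noncomputable def bidemocraticNorm (e : ℕ → X) (coord : ℕ → X →L[ℝ] ℝ) (x : X) : ℝ :=
  max ‖x‖ (marcinkiewiczNorm e coord x)

theorem norm_le_bidemocraticNorm (x : X) : ‖x‖ ≤ bidemocraticNorm e coord x :=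
  le_max_left _ _

theorem marcinkiewiczNorm_le_bidemocraticNorm (x : X) :
    marcinkiewiczNorm e coord x ≤ bidemocraticNorm e coord x :=
  le_max_right _ _

theorem bidemocraticNorm_zero : bidemocraticNorm e coord (0 : X) = 0 := by
  simp [bidemocraticNorm, marcinkiewiczNorm_zero]

theorem bidemocraticNorm_nonneg (x : X) : 0 ≤ bidemocraticNorm e coord x :=
  (norm_nonneg x).trans (norm_le_bidemocraticNorm x)

variable {K : ℝ} (hK : ∀ (x : X) (A : Finset ℕ), A.Nonempty → coordAverage e coord A x ≤ K * ‖x‖)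
include hK

theorem bidemocraticNorm_le_mul_norm (x : X) : bidemocraticNorm e coord x ≤ max 1 K * ‖x‖ :=
  max_le (le_mul_of_one_le_left (norm_nonneg x) (le_max_left _ _))
    ((marcinkiewiczNorm_le_mul_norm hK x).trans (by gcongr; exact le_max_right _ _))

theorem bidemocraticNorm_add_le (x y : X) :
    bidemocraticNorm e coord (x + y) ≤ bidemocraticNorm e coord x + bidemocraticNorm e coord y :=
  max_le ((norm_add_le x y).trans (add_le_add (le_max_left _ _) (le_max_left _ _)))
    ((marcinkiewiczNorm_add_le hK x y).trans (add_le_add (le_max_right _ _) (le_max_right _ _)))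

theorem bidemocraticNorm_smul (a : ℝ) (x : X) :
    bidemocraticNorm e coord (a • x) = |a| * bidemocraticNorm e coord x := by
  rw [bidemocraticNorm, bidemocraticNorm, norm_smul, marcinkiewiczNorm_smul hK, Real.norm_eq_abs,
    mul_max_of_nonneg _ _ (abs_nonneg a)]

theorem isEquivNorm_bidemocraticNorm : IsEquivNorm (bidemocraticNorm e coord) :=
  ⟨bidemocraticNorm_add_le hK, bidemocraticNorm_smul hK, 1, max 1 K, one_pos,
    fun x => ⟨(one_mul ‖x‖).trans_le (norm_le_bidemocraticNorm x),
      bidemocraticNorm_le_mul_norm hK x⟩⟩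

theorem continuous_bidemocraticNorm : Continuous (bidemocraticNorm e coord) :=
  (LipschitzWith.of_le_add_mul' (max 1 K) fun x y => by
    rw [dist_eq_norm]
    calc bidemocraticNorm e coord x = bidemocraticNorm e coord (y + (x - y)) := by
          rw [add_sub_cancel]
      _ ≤ bidemocraticNorm e coord y + bidemocraticNorm e coord (x - y) :=
          bidemocraticNorm_add_le hK _ _
      _ ≤ _ := by gcongr; exact bidemocraticNorm_le_mul_norm hK _).continuous

theorem isUnconditionalWith_bidemocraticNorm (hbasis : IsSchauderBasis e coord)
    (huncond : IsUnconditionalWith e (‖·‖) 1) :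
    IsUnconditionalWith e (bidemocraticNorm e coord) 1 := fun s a b hab => by
  rw [one_mul]
  refine max_le_max (by simpa using huncond s a b hab) (marcinkiewiczNorm_mono hK fun i => ?_)
  rw [hbasis.coord_sum_smul, hbasis.coord_sum_smul]
  split_ifs
  exacts [hab i, le_rfl]

end BidemocraticNorm

section Democracy

variable {X : Type*} [NormedAddCommGroup X] [NormedSpace ℝ X] {e : ℕ → X}
  {coord : ℕ → X →L[ℝ] ℝ}

theorem coordAverage_sum_le_fundFn (hbasis : IsSchauderBasis e coord) {C : ℝ}
    (hC : ∀ i, ‖e i‖ ≤ C) (A : Finset ℕ) {B : Finset ℕ} (hB : B.Nonempty) :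
    coordAverage e coord B (∑ i ∈ A, e i) ≤ fundFn e (‖·‖) A.card := by
  have hB' : (0 : ℝ) < B.card := by exact_mod_cast hB.card_pos
  have hsum : ∑ i ∈ B, |coord i (∑ j ∈ A, e j)| = (B ∩ A).card := by
    simp [hbasis.coord_sum, apply_ite]
  have hBA : ((B ∩ A).card : ℝ) ≤ B.card := by exact_mod_cast card_le_card inter_subset_left
  have hAB : ((B ∩ A).card : ℝ) ≤ A.card := by exact_mod_cast card_le_card inter_subset_right
  have := fundFn_nonneg e B.card
  rw [coordAverage, hsum, div_mul_eq_mul_div, div_le_iff₀ hB']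
  rcases le_total B.card A.card with hle | hle
  · exact mul_le_mul (fundFn_mono hC hle) hBA (Nat.cast_nonneg _) (fundFn_nonneg e _)
  · calc fundFn e (‖·‖) B.card * (B ∩ A).card ≤ A.card * fundFn e (‖·‖) B.card := by
          rw [mul_comm]; gcongr
      _ ≤ B.card * fundFn e (‖·‖) A.card := natCast_mul_fundFn_le hC hle
      _ = fundFn e (‖·‖) A.card * B.card := mul_comm _ _

variable {K : ℝ} (hK : ∀ (x : X) (A : Finset ℕ), A.Nonempty → coordAverage e coord A x ≤ K * ‖x‖)
include hK

theorem bidemocraticNorm_sum (hbasis : IsSchauderBasis e coord) {C : ℝ}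
    (hC : ∀ i, ‖e i‖ ≤ C) (A : Finset ℕ) :
    bidemocraticNorm e coord (∑ i ∈ A, e i) = fundFn e (‖·‖) A.card := by
  refine le_antisymm (max_le (norm_sum_le_fundFn hC le_rfl)
    (marcinkiewiczNorm_le fun B hB => coordAverage_sum_le_fundFn hbasis hC A hB)) ?_
  rcases A.eq_empty_or_nonempty with rfl | hA
  · rw [card_empty, fundFn_zero]; exact bidemocraticNorm_nonneg _
  have hA' : (A.card : ℝ) ≠ 0 := by exact_mod_cast hA.card_pos.ne'
  have hself : coordAverage e coord A (∑ i ∈ A, e i) = fundFn e (‖·‖) A.card := by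
    simp only [coordAverage, hbasis.coord_sum]
    rw [sum_congr rfl fun i hi => by rw [if_pos hi, abs_one], sum_const, nsmul_one,
      div_mul_cancel₀ _ hA']
  exact hself.symm.trans_le ((coordAverage_le_marcinkiewiczNorm hK _ hA).trans
    (marcinkiewiczNorm_le_bidemocraticNorm _))

theorem fundFn_bidemocraticNorm (hbasis : IsSchauderBasis e coord) {C : ℝ}
    (hC : ∀ i, ‖e i‖ ≤ C) (n : ℕ) :
    fundFn e (bidemocraticNorm e coord) n = fundFn e (‖·‖) n := by
  have hle : ∀ A : Finset ℕ, A.card ≤ n → bidemocraticNorm e coord (∑ i ∈ A, e i) ≤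
      fundFn e (‖·‖) n := fun A hA =>
    (bidemocraticNorm_sum hK hbasis hC A).trans_le (fundFn_mono hC hA)
  refine le_antisymm (fundFn_le hle) (fundFn_le fun A hA => ?_)
  exact (norm_le_bidemocraticNorm _).trans
    (le_csSup ⟨_, by rintro _ ⟨B, hB, rfl⟩; exact hle B hB⟩ ⟨A, hA, rfl⟩)

theorem isDemocraticWith_bidemocraticNorm (hbasis : IsSchauderBasis e coord) {C : ℝ}
    (hC : ∀ i, ‖e i‖ ≤ C) : IsDemocraticWith e (bidemocraticNorm e coord) 1 := fun A B h => by
  rw [one_mul, bidemocraticNorm_sum hK hbasis hC, bidemocraticNorm_sum hK hbasis hC]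
  exact fundFn_mono hC h

theorem abs_sum_coord_le_of_bidemocraticNorm_le_one (hsemi : IsSeminormalized e) {x : X}
    (hx : bidemocraticNorm e coord x ≤ 1) (A : Finset ℕ) :
    |∑ i ∈ A, coord i x| ≤ A.card / fundFn e (‖·‖) A.card := by
  rcases A.eq_empty_or_nonempty with rfl | hA
  · simp
  have hA' : (0 : ℝ) < A.card := by exact_mod_cast hA.card_pos
  have havg : coordAverage e coord A x ≤ 1 := (coordAverage_le_marcinkiewiczNorm hK x hA).trans
    ((marcinkiewiczNorm_le_bidemocraticNorm x).trans hx)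
  rw [coordAverage, div_mul_eq_mul_div, div_le_one hA'] at havg
  rw [le_div_iff₀ (fundFn_pos hsemi hA.card_pos)]
  calc |∑ i ∈ A, coord i x| * fundFn e (‖·‖) A.card
      ≤ (∑ i ∈ A, |coord i x|) * fundFn e (‖·‖) A.card := by
        gcongr; · exact fundFn_nonneg e _
        exact abs_sum_le_sum_abs _ _
    _ ≤ A.card := by linarith

theorem dualNormFinset_bidemocraticNorm (hbasis : IsSchauderBasis e coord)
    (hsemi : IsSeminormalized e) (A : Finset ℕ) :
    dualNormFinset coord (bidemocraticNorm e coord) A = A.card / fundFn e (‖·‖) A.card := by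
  obtain ⟨C, hC⟩ := hsemi.exists_norm_le
  refine le_antisymm (dualNormFinset_le (div_nonneg (Nat.cast_nonneg _) (fundFn_nonneg e _))
    fun x hx => abs_sum_coord_le_of_bidemocraticNorm_le_one hK hsemi hx A) ?_
  rcases A.eq_empty_or_nonempty with rfl | hA
  · simpa using dualNormFinset_nonneg coord (bidemocraticNorm e coord) ∅
  have hφ := fundFn_pos hsemi hA.card_pos
  refine le_csSup ⟨A.card / fundFn e (‖·‖) A.card, ?_⟩
    ⟨(fundFn e (‖·‖) A.card)⁻¹ • ∑ j ∈ A, e j, ?_, ?_⟩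
  · rintro _ ⟨x, hx, rfl⟩
    exact abs_sum_coord_le_of_bidemocraticNorm_le_one hK hsemi hx A
  · rw [bidemocraticNorm_smul hK, bidemocraticNorm_sum hK hbasis hC,
      abs_of_pos (inv_pos.2 hφ), inv_mul_cancel₀ hφ.ne']
  · simp only [map_smul, smul_eq_mul, hbasis.coord_sum]
    rw [sum_congr rfl fun i hi => by rw [if_pos hi, mul_one], sum_const, nsmul_eq_mul,
      abs_of_nonneg (by positivity), div_eq_mul_inv]

theorem isBidemocraticWith_bidemocraticNorm (hbasis : IsSchauderBasis e coord)
    (hsemi : IsSeminormalized e) : IsBidemocraticWith e coord (bidemocraticNorm e coord) 1 := by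
  obtain ⟨C, hC⟩ := hsemi.exists_norm_le
  intro n
  have hdual : dualFundFn coord (bidemocraticNorm e coord) n ≤ n / fundFn e (‖·‖) n :=
    Real.sSup_le (by
      rintro _ ⟨B, hB, rfl⟩
      rw [dualNormFinset_bidemocraticNorm hK hbasis hsemi]
      exact monotone_natCast_div_fundFn hsemi hB)
      (div_nonneg (Nat.cast_nonneg _) (fundFn_nonneg e _))
  rw [fundFn_bidemocraticNorm hK hbasis hC, one_mul]
  calc fundFn e (‖·‖) n * dualFundFn coord (bidemocraticNorm e coord) n
      ≤ fundFn e (‖·‖) n * (n / fundFn e (‖·‖) n) := by gcongr; exact fundFn_nonneg e n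
    _ ≤ n := by
        rcases eq_or_ne (fundFn e (‖·‖) n) 0 with h | h
        · simp [h]
        · rw [mul_div_cancel₀ _ h]

end Democracy

section Greedy

variable {X : Type*} [NormedAddCommGroup X] [NormedSpace ℝ X] {e : ℕ → X}
  {coord : ℕ → X →L[ℝ] ℝ} {K : ℝ}
  (hK : ∀ (x : X) (A : Finset ℕ), A.Nonempty → coordAverage e coord A x ≤ K * ‖x‖)
  (hbasis : IsSchauderBasis e coord) (huncond : IsUnconditionalWith e (‖·‖) 1)
include hK hbasis huncond

theorem bidemocraticNorm_sub_sum_coord_smul_le {B D : Finset ℕ} (hBD : B ⊆ D) (x : X)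
    (b : ℕ → ℝ) : bidemocraticNorm e coord (x - ∑ i ∈ D, coord i x • e i) ≤
      bidemocraticNorm e coord (x - ∑ i ∈ B, b i • e i) := by
  set z := ∑ i ∈ B, b i • e i
  have hz : ∑ i ∈ D, coord i z • e i = z := by
    simp only [z, hbasis.coord_sum_smul, ite_smul, zero_smul]
    rw [sum_ite_mem, inter_eq_right.2 hBD]
  have hsplit : x - ∑ i ∈ D, coord i x • e i = (x - z) - ∑ i ∈ D, coord i (x - z) • e i := by
    simp only [map_sub, sub_smul, sum_sub_distrib, hz]
    abel
  rw [hsplit]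
  simpa using hbasis.sub_sum_coord_smul_le (continuous_bidemocraticNorm hK)
    (isUnconditionalWith_bidemocraticNorm hK hbasis huncond) (x - z) D

/-- The coefficients of `x` on `B \ A` are at most `α = min_{A \ B} |e_i^*(x)|` and
`|B \ A| ≤ |A \ B|`, so the left side is at most `α φ(|A \ B|)`; this is at most the average over
`A \ B` of the coefficients of `x - Σ_{i∈B} b_i e_i`, which agree there with those of `x`. -/
theorem bidemocraticNorm_sum_coord_sdiff_le {C : ℝ} (hC : ∀ i, ‖e i‖ ≤ C) {x : X}
    {A B : Finset ℕ} (hA : GreedySet coord x A) (hBA : B.card ≤ A.card) (b : ℕ → ℝ) :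
    bidemocraticNorm e coord (∑ i ∈ B \ A, coord i x • e i) ≤
      bidemocraticNorm e coord (x - ∑ i ∈ B, b i • e i) := by
  set z := ∑ i ∈ B, b i • e i
  rcases (B \ A).eq_empty_or_nonempty with hBA0 | hBAne
  · rw [hBA0, sum_empty, bidemocraticNorm_zero]; exact bidemocraticNorm_nonneg _
  have hcard : (B \ A).card ≤ (A \ B).card := card_sdiff_le_card_sdiff_iff.2 hBA
  have hAB : (A \ B).Nonempty := card_pos.1 (hBAne.card_pos.trans_le hcard)
  obtain ⟨j, hj, hjmin⟩ := exists_min_image (A \ B) (fun j => |coord j x|) hAB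
  set α := |coord j x|
  have hAB' : (0 : ℝ) < (A \ B).card := by exact_mod_cast hAB.card_pos
  have hφ := fundFn_nonneg e (A \ B).card
  have hsum : (A \ B).card * α ≤ ∑ i ∈ A \ B, |coord i (x - z)| := by
    rw [← nsmul_eq_mul, ← sum_const]
    refine sum_le_sum fun i hi => ?_
    rw [map_sub, hbasis.coord_sum_smul, if_neg (mem_sdiff.1 hi).2, sub_zero]
    exact hjmin i hi
  have hmask : ∑ i ∈ B \ A, coord i x • e i =
      ∑ i ∈ B \ A, (if i ∈ B \ A then coord i x else 0) • e i :=
    sum_congr rfl fun i hi => by rw [if_pos hi]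
  calc bidemocraticNorm e coord (∑ i ∈ B \ A, coord i x • e i)
      ≤ bidemocraticNorm e coord (∑ i ∈ B \ A, α • e i) := by
        rw [hmask]
        refine (isUnconditionalWith_bidemocraticNorm hK hbasis huncond _ _ _ fun i => ?_).trans_eq
          (one_mul _)
        split_ifs with hi
        · exact (hA j (mem_sdiff.1 hj).1 i (mem_sdiff.1 hi).2).trans (abs_abs _).ge
        · simp
      _ = α * fundFn e (‖·‖) (B \ A).card := by
        rw [← smul_sum, bidemocraticNorm_smul hK, bidemocraticNorm_sum hK hbasis hC, abs_abs]
      _ ≤ α * fundFn e (‖·‖) (A \ B).card := by gcongr; exact fundFn_mono hC hcard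
      _ = fundFn e (‖·‖) (A \ B).card / (A \ B).card * ((A \ B).card * α) := by
        field_simp
      _ ≤ coordAverage e coord (A \ B) (x - z) := by rw [coordAverage]; gcongr
      _ ≤ bidemocraticNorm e coord (x - z) :=
        (coordAverage_le_marcinkiewiczNorm hK _ hAB).trans
          (marcinkiewiczNorm_le_bidemocraticNorm _)

theorem isGreedyWith_bidemocraticNorm {C : ℝ} (hC : ∀ i, ‖e i‖ ≤ C) :
    IsGreedyWith e coord (bidemocraticNorm e coord) 2 := by
  rintro x _ A rfl hA
  rw [bestApprox, ← div_le_iff₀' two_pos]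
  refine le_csInf (by exact ⟨_, ∅, 0, Nat.zero_le _, rfl⟩) ?_
  rintro _ ⟨B, b, hBA, rfl⟩
  rw [div_le_iff₀' two_pos]
  have hunion : x - ∑ i ∈ A, coord i x • e i =
      (x - ∑ i ∈ A ∪ B, coord i x • e i) + ∑ i ∈ B \ A, coord i x • e i := by
    rw [← union_sdiff_self_eq_union, sum_union disjoint_sdiff]
    abel
  calc bidemocraticNorm e coord (x - ∑ i ∈ A, coord i x • e i)
      ≤ bidemocraticNorm e coord (x - ∑ i ∈ A ∪ B, coord i x • e i) +
          bidemocraticNorm e coord (∑ i ∈ B \ A, coord i x • e i) := by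
        rw [hunion]; exact bidemocraticNorm_add_le hK _ _
    _ ≤ bidemocraticNorm e coord (x - ∑ i ∈ B, b i • e i) +
          bidemocraticNorm e coord (x - ∑ i ∈ B, b i • e i) :=
        add_le_add (bidemocraticNorm_sub_sum_coord_smul_le hK hbasis huncond subset_union_right x b)
          (bidemocraticNorm_sum_coord_sdiff_le hK hbasis huncond hC hA hBA b)
    _ = 2 * bidemocraticNorm e coord (x - ∑ i ∈ B, b i • e i) := (two_mul _).symm

end Greedy

theorem bidemocratic_renorming_general
    {X : Type*} [NormedAddCommGroup X] [NormedSpace ℝ X]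
    (e : ℕ → X) (coord : ℕ → X →L[ℝ] ℝ) (Δ : ℝ)
    (hbasis : IsSchauderBasis e coord)
    (hsemi : IsSeminormalized e)
    (huncond : IsUnconditionalWith e (fun x => ‖x‖) 1)
    (hbidem : IsBidemocraticWith e coord (fun x => ‖x‖) Δ)
    (tn : X → ℝ)
    (htn : ∀ x : X, tn x = max ‖x‖ (sSup { r | ∃ A : Finset ℕ, A.Nonempty ∧
      r = (fundFn e (fun z => ‖z‖) A.card / A.card) * ∑ i ∈ A, |coord i x| })) :
    IsEquivNorm tn ∧
    IsUnconditionalWith e tn 1 ∧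
    IsBidemocraticWith e coord tn 1 ∧
    IsDemocraticWith e tn 1 ∧
    (∀ A B : Finset ℕ, A.card ≤ B.card →
      dualNormFinset coord tn A ≤ dualNormFinset coord tn B) ∧
    IsGreedyWith e coord tn 2 := by
  obtain rfl : tn = bidemocraticNorm e coord := funext htn
  obtain ⟨c, hc, hce⟩ := hsemi.exists_le_norm
  obtain ⟨C, hC⟩ := hsemi.exists_norm_le
  have hK : ∀ x A, A.Nonempty → coordAverage e coord A x ≤ 2 * Δ * ‖x‖ := fun x _ hA =>
    coordAverage_le (hbasis.norm_coord_le huncond zero_le_one hc hce) hbidem x hA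
  refine ⟨isEquivNorm_bidemocraticNorm hK, isUnconditionalWith_bidemocraticNorm hK hbasis huncond,
    isBidemocraticWith_bidemocraticNorm hK hbasis hsemi,
    isDemocraticWith_bidemocraticNorm hK hbasis hC, fun A B hAB => ?_,
    isGreedyWith_bidemocraticNorm hK hbasis huncond hC⟩
  rw [dualNormFinset_bidemocraticNorm hK hbasis hsemi,
    dualNormFinset_bidemocraticNorm hK hbasis hsemi]
  exact monotone_natCast_div_fundFn hsemi hAB

/-- if `(e_i)` is a `1`-unconditional, `Δ`-bidemocratic (seminormalized
Schauder) basis of a Banach space `X` with fundamental function `φ`, then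
`|||x||| = max {‖x‖, sup_A (φ(|A|)/|A|) Σ_{i∈A} |e_i^*(x)|}` is an equivalent norm on `X`
w.r.t. which `(e_i)` is `1`-unconditional and `1`-bidemocratic; in particular `(e_i)` and
`(e_i^*)` are `1`-democratic and `(e_i)` is `2`-greedy. -/
theorem bidemocratic_renorming
    {X : Type*} [NormedAddCommGroup X] [NormedSpace ℝ X] [CompleteSpace X]
    (e : ℕ → X) (coord : ℕ → X →L[ℝ] ℝ) (Δ : ℝ) (hΔ : 1 ≤ Δ)
    (hbasis : IsSchauderBasis e coord)
    (hsemi : IsSeminormalized e)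
    (huncond : IsUnconditionalWith e (fun x => ‖x‖) 1)
    (hbidem : IsBidemocraticWith e coord (fun x => ‖x‖) Δ)
    (tn : X → ℝ)
    (htn : ∀ x : X, tn x = max ‖x‖ (sSup { r | ∃ A : Finset ℕ, A.Nonempty ∧
      r = (fundFn e (fun z => ‖z‖) A.card / A.card) * ∑ i ∈ A, |coord i x| })) :
    IsEquivNorm tn ∧
    IsUnconditionalWith e tn 1 ∧
    IsBidemocraticWith e coord tn 1 ∧
    IsDemocraticWith e tn 1 ∧
    (∀ A B : Finset ℕ, A.card ≤ B.card →
      dualNormFinset coord tn A ≤ dualNormFinset coord tn B) ∧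
    IsGreedyWith e coord tn 2 :=
  bidemocratic_renorming_general e coord Δ hbasis hsemi huncond hbidem tn htn
end

section
/- Let φ: [1,∞) → (0,∞) be a fundamental function and set λ(x) = φ(x)/x. Then for every integer m ≥ 1, δ_φ(m) = liminf_{n→∞, n∈ℕ} λ(mn)/λ(n); that is, the liminf over real x → ∞ defining δ_φ(m) equals the liminf along positive integers. Consequently δ(φ) = lim_{m→∞} liminf_{n→∞, n∈ℕ} λ(mn)/λ(n). -/
set_option maxHeartbeats 1000000
open Filter


open scoped BigOperators

private lemma aux_bounds (φ : ℝ → ℝ) (hφ : IsFundamentalFunction φ) {y x : ℝ}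
    (hy : 1 ≤ y) (hx : 1 ≤ x) :
    0 < φ (y * x) / (y * φ x) ∧ φ (y * x) / (y * φ x) ≤ 1 := by
  obtain ⟨hpos, hmono, hlam⟩ := hφ
  have hx0 : (0:ℝ) < x := by linarith
  have hy0 : (0:ℝ) < y := by linarith
  have hyx : (1:ℝ) ≤ y * x := by nlinarith
  have hφx := hpos x hx
  have hφyx := hpos _ hyx
  constructor
  · exact div_pos hφyx (mul_pos hy0 hφx)
  · rw [div_le_one (mul_pos hy0 hφx)]
    have h1 := hlam x (y*x) hx (by nlinarith)
    rw [div_le_div_iff₀ (by linarith) hx0] at h1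
    nlinarith

private lemma aux_bdd (φ : ℝ → ℝ) (hφ : IsFundamentalFunction φ) {y : ℝ} (hy : 1 ≤ y) :
    IsBoundedUnder (· ≥ ·) atTop (fun x : ℝ => φ (y*x)/(y*φ x)) ∧
    IsBoundedUnder (· ≤ ·) atTop (fun x : ℝ => φ (y*x)/(y*φ x)) :=
  ⟨⟨0, eventually_map.2 ((eventually_ge_atTop 1).mono fun x hx =>
      (aux_bounds φ hφ hy hx).1.le)⟩,
   ⟨1, eventually_map.2 ((eventually_ge_atTop 1).mono fun x hx =>
      (aux_bounds φ hφ hy hx).2)⟩⟩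

private lemma deltaFn_nonneg (φ : ℝ → ℝ) (hφ : IsFundamentalFunction φ) {y : ℝ} (hy : 1 ≤ y) :
    0 ≤ deltaFn φ y :=
  Filter.le_liminf_of_le ((aux_bdd φ hφ hy).2.isCoboundedUnder_ge)
    ((eventually_ge_atTop 1).mono fun x hx => (aux_bounds φ hφ hy hx).1.le)

private lemma deltaFn_anti (φ : ℝ → ℝ) (hφ : IsFundamentalFunction φ) {y y' : ℝ}
    (hy : 1 ≤ y) (hyy' : y ≤ y') : deltaFn φ y' ≤ deltaFn φ y := by
  have hy' : 1 ≤ y' := hy.trans hyy'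
  have hpos := hφ.1
  have hlam := hφ.2.2
  apply Filter.liminf_le_liminf
  · filter_upwards [eventually_ge_atTop (1:ℝ)] with x hx
    have hx0 : (0:ℝ) < x := by linarith
    have hφx := hpos x hx
    have key := hlam (y*x) (y'*x) (by nlinarith) (by nlinarith)
    have e : ∀ z : ℝ, 1 ≤ z → φ (z*x)/(z*φ x) = φ (z*x)/(z*x) * (x / φ x) := by
      intro z hz
      have hz0 : z ≠ 0 := by linarith
      field_simp
    rw [e y hy, e y' hy']
    exact mul_le_mul_of_nonneg_right key (div_nonneg hx0.le hφx.le)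
  · exact (aux_bdd φ hφ hy').1
  · exact (aux_bdd φ hφ hy).2.isCoboundedUnder_ge

private lemma part1 (φ : ℝ → ℝ) (hφ : IsFundamentalFunction φ) (m : ℕ) (hm : 1 ≤ m) :
    deltaFn φ (m : ℝ) =
      Filter.liminf
        (fun n : ℕ => (φ ((m : ℝ) * n) / ((m : ℝ) * n)) / (φ (n : ℝ) / n))
        Filter.atTop := by
  have hpos := hφ.1
  have hmono := hφ.2.1
  have hlam := hφ.2.2
  set y : ℝ := (m : ℝ) with hydef
  have hy : (1:ℝ) ≤ y := by rw [hydef]; exact_mod_cast hm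
  have hy0 : (0:ℝ) < y := by linarith
  set g : ℝ → ℝ := fun x => φ (y * x) / (y * φ x) with hgdef
  -- rephrase the nat liminf
  have hcongr : Filter.liminf
      (fun n : ℕ => (φ ((m : ℝ) * n) / ((m : ℝ) * n)) / (φ (n : ℝ) / n)) Filter.atTop
      = Filter.liminf (fun n : ℕ => g n) Filter.atTop := by
    apply Filter.liminf_congr
    filter_upwards [eventually_ge_atTop 1] with n hn
    have hn1 : (1:ℝ) ≤ (n:ℝ) := by exact_mod_cast hn
    have hn0 : (n:ℝ) ≠ 0 := by linarith
    have hφn : φ (n:ℝ) ≠ 0 := (hpos _ hn1).ne'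
    simp only [hgdef, hydef]
    field_simp
  -- g over nat is bounded
  have hnatb : IsBoundedUnder (· ≥ ·) atTop (fun n : ℕ => g n) :=
    ⟨0, eventually_map.2 ((eventually_ge_atTop 1).mono fun n hn =>
      (aux_bounds φ hφ hy (by exact_mod_cast hn)).1.le)⟩
  have hnatb' : IsBoundedUnder (· ≤ ·) atTop (fun n : ℕ => g n) :=
    ⟨1, eventually_map.2 ((eventually_ge_atTop 1).mono fun n hn =>
      (aux_bounds φ hφ hy (by exact_mod_cast hn)).2)⟩
  rw [hcongr]
  have hle : deltaFn φ y ≤ Filter.liminf (fun n : ℕ => g n) Filter.atTop := by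
    rw [deltaFn, Filter.liminf_eq, Filter.liminf_eq]
    apply csSup_le_csSup
    · refine ⟨1, fun a ha => ?_⟩
      simp only [Set.mem_setOf_eq] at ha
      obtain ⟨n, han, hn⟩ := (ha.and (eventually_ge_atTop 1)).exists
      exact han.trans (aux_bounds φ hφ hy (by exact_mod_cast hn)).2
    · exact ⟨0, (eventually_ge_atTop (1:ℝ)).mono fun x hx => (aux_bounds φ hφ hy hx).1.le⟩
    · intro a ha
      exact tendsto_natCast_atTop_atTop.eventually ha
  have hge : Filter.liminf (fun n : ℕ => g n) Filter.atTop ≤ deltaFn φ y := by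
    apply le_of_forall_lt_imp_le_of_dense
    intro a ha
    rcases le_or_gt a 0 with ha0 | ha0
    · exact ha0.trans (deltaFn_nonneg φ hφ hy)
    obtain ⟨a', haa', ha'L⟩ := exists_between ha
    have hev : ∀ᶠ n : ℕ in atTop, a' < g n :=
      Filter.eventually_lt_of_lt_liminf ha'L hnatb
    obtain ⟨N₁, hN₁⟩ := eventually_atTop.1 hev
    set N₂ : ℕ := ⌈a / (a' - a)⌉₊ with hN₂def
    apply Filter.le_liminf_of_le ((aux_bdd φ hφ hy).2.isCoboundedUnder_ge)
    filter_upwards [eventually_ge_atTop ((max N₁ N₂ + 1 : ℕ) : ℝ)] with x hx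
    set n : ℕ := ⌊x⌋₊ with hndef
    have hxpos : (0:ℝ) < x := lt_of_lt_of_le (by positivity) hx
    have hnge : max N₁ N₂ + 1 ≤ n := Nat.le_floor hx
    have hn1 : 1 ≤ n := le_trans (Nat.le_add_left 1 _) hnge
    have hnr1 : (1:ℝ) ≤ (n:ℝ) := by exact_mod_cast hn1
    have hnx : (n:ℝ) ≤ x := Nat.floor_le hxpos.le
    have hxn1 : x ≤ (n:ℝ) + 1 := (Nat.lt_floor_add_one x).le
    have hx1 : (1:ℝ) ≤ x := hnr1.trans hnx
    -- positivity facts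
    have hφn := hpos _ hnr1
    have hφn1 := hpos ((n:ℝ)+1) (by linarith)
    have hφx := hpos x hx1
    have hyn1 : (1:ℝ) ≤ y * ((n:ℝ)+1) := by nlinarith
    have hφyn1 := hpos _ hyn1
    -- step 1 : g x ≥ lam(y(n+1)) / lam(n)
    have step1 : (φ (y*((n:ℝ)+1)) / (y*((n:ℝ)+1))) / (φ (n:ℝ) / (n:ℝ)) ≤ g x := by
      have e : g x = (φ (y*x)/(y*x)) / (φ x / x) := by
        simp only [hgdef]
        have : x ≠ 0 := hxpos.ne'
        field_simp
      rw [e]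
      have hφyx := hpos (y*x) (by nlinarith)
      exact div_le_div₀ (div_nonneg hφyx.le (by positivity))
        (hlam (y*x) (y*((n:ℝ)+1)) (by nlinarith) (by nlinarith))
        (div_pos hφx hxpos)
        (hlam (n:ℝ) x hnr1 hnx)
    -- step 2 : lam(y(n+1))/lam(n) = g(n+1) * (lam(n+1)/lam(n))
    have step2 : (φ (y*((n:ℝ)+1)) / (y*((n:ℝ)+1))) / (φ (n:ℝ) / (n:ℝ))
        = (φ (y*((n:ℝ)+1)) / (y * φ ((n:ℝ)+1))) * ((φ ((n:ℝ)+1)/((n:ℝ)+1)) / (φ (n:ℝ) / (n:ℝ))) := by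
      have h1 : (n:ℝ) ≠ 0 := by linarith
      have h2 : (n:ℝ) + 1 ≠ 0 := by linarith
      field_simp
    -- step 3 : lam(n+1)/lam(n) ≥ n/(n+1)
    have step3 : (n:ℝ)/((n:ℝ)+1) ≤ (φ ((n:ℝ)+1)/((n:ℝ)+1)) / (φ (n:ℝ) / (n:ℝ)) := by
      have hQ : φ (n:ℝ) ≤ φ ((n:ℝ)+1) := hmono _ _ hnr1 (by linarith)
      have e : (φ ((n:ℝ)+1)/((n:ℝ)+1)) / (φ (n:ℝ) / (n:ℝ))
          = (φ ((n:ℝ)+1) * (n:ℝ)) / (((n:ℝ)+1) * φ (n:ℝ)) := by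
        field_simp
        try ring
      rw [e, div_le_div_iff₀ (by positivity : (0:ℝ) < (n:ℝ)+1) (mul_pos (by positivity) hφn)]
      have key := mul_le_mul_of_nonneg_left hQ (by positivity : (0:ℝ) ≤ (n:ℝ)*((n:ℝ)+1))
      nlinarith [key]
    -- step 4 : a' < g(n+1)
    have step4 : a' < φ (y*((n:ℝ)+1)) / (y * φ ((n:ℝ)+1)) := by
      have := hN₁ (n+1) (by omega)
      simpa only [hgdef, Nat.cast_add, Nat.cast_one] using this
    -- step 5 : a ≤ a' * (n/(n+1))
    have step5 : a ≤ a' * ((n:ℝ)/((n:ℝ)+1)) := by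
      have hN₂n : N₂ ≤ n := by omega
      have hceil : a / (a' - a) ≤ (n:ℝ) := le_trans (Nat.le_ceil _) (by exact_mod_cast hN₂n)
      have hd : (0:ℝ) < a' - a := by linarith
      rw [div_le_iff₀ hd] at hceil
      rw [mul_div_assoc', le_div_iff₀ (by positivity)]
      nlinarith
    -- combine
    have hgpos : 0 < φ (y*((n:ℝ)+1)) / (y * φ ((n:ℝ)+1)) := div_pos hφyn1 (by positivity)
    calc a ≤ a' * ((n:ℝ)/((n:ℝ)+1)) := step5
      _ ≤ (φ (y*((n:ℝ)+1)) / (y * φ ((n:ℝ)+1))) * ((n:ℝ)/((n:ℝ)+1)) :=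
        mul_le_mul_of_nonneg_right step4.le (by positivity)
      _ ≤ (φ (y*((n:ℝ)+1)) / (y * φ ((n:ℝ)+1))) * ((φ ((n:ℝ)+1)/((n:ℝ)+1)) / (φ (n:ℝ) / (n:ℝ))) :=
        mul_le_mul_of_nonneg_left step3 hgpos.le
      _ = (φ (y*((n:ℝ)+1)) / (y*((n:ℝ)+1))) / (φ (n:ℝ) / (n:ℝ)) := step2.symm
      _ ≤ g x := step1
  exact le_antisymm hle hge


/-- for a fundamental function `φ` with `λ(x) = φ(x)/x`, for every integer
`m ≥ 1` the liminf over real `x → ∞` defining `δ_φ(m)` equals the liminf of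
`λ(mn)/λ(n)` along positive integers `n`; consequently
`δ(φ) = lim_{m→∞} liminf_{n→∞, n∈ℕ} λ(mn)/λ(n)`. -/
theorem deltaFn_eq_liminf_nat (φ : ℝ → ℝ) (hφ : IsFundamentalFunction φ) :
    (∀ m : ℕ, 1 ≤ m →
      deltaFn φ (m : ℝ) =
        Filter.liminf
          (fun n : ℕ => (φ ((m : ℝ) * n) / ((m : ℝ) * n)) / (φ (n : ℝ) / n))
          Filter.atTop) ∧
    Filter.Tendsto
      (fun m : ℕ =>
        Filter.liminf
          (fun n : ℕ => (φ ((m : ℝ) * n) / ((m : ℝ) * n)) / (φ (n : ℝ) / n))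
          Filter.atTop)
      Filter.atTop (nhds (deltaParam φ)) := by
  refine ⟨fun m hm => part1 φ hφ m hm, ?_⟩
  set S : Set ℝ := { d | ∃ y : ℝ, 1 ≤ y ∧ d = deltaFn φ y } with hSdef
  have hSne : S.Nonempty := ⟨deltaFn φ 1, 1, le_refl 1, rfl⟩
  have hSbdd : BddBelow S := by
    refine ⟨0, fun d hd => ?_⟩
    obtain ⟨y, hy, rfl⟩ := hd
    exact deltaFn_nonneg φ hφ hy
  have hIle : ∀ y : ℝ, 1 ≤ y → deltaParam φ ≥ sInf S := fun _ _ => le_refl _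
  have hmem : ∀ y : ℝ, 1 ≤ y → sInf S ≤ deltaFn φ y := fun y hy =>
    csInf_le hSbdd ⟨y, hy, rfl⟩
  have hIP : deltaParam φ = sInf S := rfl
  rw [hIP]
  apply tendsto_order.mpr
  constructor
  · intro a ha
    filter_upwards [eventually_ge_atTop 1] with m hm
    rw [← part1 φ hφ m hm]
    exact lt_of_lt_of_le ha (hmem (m:ℝ) (by exact_mod_cast hm))
  · intro b hb
    obtain ⟨d, hdS, hdb⟩ := Real.lt_sInf_add_pos hSne (sub_pos.mpr hb)
    obtain ⟨y, hy, rfl⟩ := hdS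
    have hdb' : deltaFn φ y < b := by linarith [hdb]
    filter_upwards [eventually_ge_atTop (max ⌈y⌉₊ 1)] with m hm
    have hm1 : 1 ≤ m := le_trans (le_max_right _ _) hm
    rw [← part1 φ hφ m hm1]
    have hym : y ≤ (m:ℝ) := by
      calc y ≤ (⌈y⌉₊ : ℝ) := Nat.le_ceil y
        _ ≤ (m:ℝ) := by exact_mod_cast le_trans (le_max_left _ _) hm
    exact lt_of_le_of_lt (deltaFn_anti φ hφ hy hym) hdb'
end

section
/- Let φ be a fundamental function with δ(φ) > 0. Then for every ε > 0 and every positive integer m there exists a fundamental function ψ equivalent to φ such that δ_ψ(m) > 1/(1+ε). -/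
/-!
Replace `φ` by the finite dilation average `ψ(x) = ∑_{j=0}^{k} φ(mʲx)/mʲ`, which is equivalent
to `φ` (it lies between `φ` and `(k+1)φ`). Telescoping gives
`ψ(mx)/(mψ(x)) = 1 - (φ(x) - φ(m^{k+1}x)/m^{k+1})/ψ(x)`. For `0 < c < δ(φ)` every term
`φ(mʲx)/mʲ` with `j ≥ 1` is eventually at least `cφ(x)`, so `ψ ≥ (1 + kc)φ` and the ratio is
eventually at least `1 - (1-c)/(1+kc)`, which tends to `1` as `k → ∞`.
-/

open scoped BigOperators

open Filter Finset

theorem deltaParam_le_deltaFn {φ : ℝ → ℝ} (hδ : 0 < deltaParam φ) {y : ℝ} (hy : 1 ≤ y) :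
    deltaParam φ ≤ deltaFn φ y := by
  -- an unbounded-below set of reals has `sInf = 0`
  have hbdd : BddBelow {d | ∃ y : ℝ, 1 ≤ y ∧ d = deltaFn φ y} := by
    by_contra h
    rw [deltaParam, Real.sInf_of_not_bddBelow h] at hδ
    exact hδ.false
  exact csInf_le hbdd ⟨y, hy, rfl⟩

namespace IsFundamentalFunction

variable {φ : ℝ → ℝ}

theorem apply_mul_le (hφ : IsFundamentalFunction φ) {b x : ℝ} (hb : 1 ≤ b) (hx : 1 ≤ x) :
    φ (b * x) ≤ b * φ x := by
  have hx0 : 0 < x := by linarith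
  have h := hφ.2.2 x (b * x) hx (le_mul_of_one_le_left hx0.le hb)
  rw [div_le_div_iff₀ (by positivity) hx0] at h
  exact le_of_mul_le_mul_right (by linarith) hx0

theorem dilate (hφ : IsFundamentalFunction φ) {b : ℝ} (hb : 1 ≤ b) :
    IsFundamentalFunction fun x => φ (b * x) / b := by
  have hb0 : 0 < b := by linarith
  have hbx : ∀ x : ℝ, 1 ≤ x → 1 ≤ b * x := fun x hx => one_le_mul_of_one_le_of_one_le hb hx
  refine ⟨fun x hx => div_pos (hφ.1 _ (hbx x hx)) hb0, fun x y hx hxy => ?_, fun x y hx hxy => ?_⟩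
  · exact div_le_div_of_nonneg_right
      (hφ.2.1 _ _ (hbx x hx) (mul_le_mul_of_nonneg_left hxy hb0.le)) hb0.le
  · simpa only [div_div, mul_comm b] using
      hφ.2.2 _ _ (hbx x hx) (mul_le_mul_of_nonneg_left hxy hb0.le)

theorem sum {ι : Type*} {s : Finset ι} (hs : s.Nonempty) {f : ι → ℝ → ℝ}
    (hf : ∀ i ∈ s, IsFundamentalFunction (f i)) :
    IsFundamentalFunction fun x => ∑ i ∈ s, f i x := by
  refine ⟨fun x hx => sum_pos (fun i hi => (hf i hi).1 x hx) hs,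
    fun x y hx hxy => sum_le_sum fun i hi => (hf i hi).2.1 x y hx hxy,
    fun x y hx hxy => ?_⟩
  simpa only [sum_div] using sum_le_sum fun i hi => (hf i hi).2.2 x y hx hxy

theorem le_deltaFn (hφ : IsFundamentalFunction φ) {y C : ℝ} (hy : 1 ≤ y)
    (h : ∀ᶠ x in atTop, C ≤ φ (y * x) / (y * φ x)) : C ≤ deltaFn φ y := by
  refine le_liminf_of_le (isCoboundedUnder_ge_of_eventually_le atTop (x := 1) ?_) h
  filter_upwards [eventually_ge_atTop 1] with x hx
  have := hφ.1 x hx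
  exact (div_le_one (by positivity)).2 (hφ.apply_mul_le hy hx)

theorem eventually_lt_apply_mul_div (hφ : IsFundamentalFunction φ) {y c : ℝ} (hy : 1 ≤ y)
    (h : c < deltaFn φ y) : ∀ᶠ x in atTop, c * φ x < φ (y * x) / y := by
  have hy0 : 0 < y := by linarith
  have hnonneg : ∀ᶠ x in atTop, 0 ≤ φ (y * x) / (y * φ x) := by
    filter_upwards [eventually_ge_atTop 1] with x hx
    have := hφ.1 _ (one_le_mul_of_one_le_of_one_le hy hx)
    have := hφ.1 x hx
    positivity
  filter_upwards [eventually_lt_of_lt_liminf h ⟨0, eventually_map.2 hnonneg⟩,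
    eventually_ge_atTop 1] with x hx hx1
  rwa [lt_div_iff₀ (mul_pos hy0 (hφ.1 x hx1)), mul_left_comm, ← lt_div_iff₀' hy0] at hx

end IsFundamentalFunction

noncomputable def dilationSum (φ : ℝ → ℝ) (b : ℝ) (k : ℕ) (x : ℝ) : ℝ :=
  ∑ j ∈ range (k + 1), φ (b ^ j * x) / b ^ j

section dilationSum

variable {φ : ℝ → ℝ} {b : ℝ}

theorem isFundamentalFunction_dilationSum (hφ : IsFundamentalFunction φ) (hb : 1 ≤ b)
    (k : ℕ) : IsFundamentalFunction (dilationSum φ b k) :=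
  IsFundamentalFunction.sum nonempty_range_add_one fun _ _ => hφ.dilate (one_le_pow₀ hb)

theorem fundEquiv_dilationSum (hφ : IsFundamentalFunction φ)
    (hb : 1 ≤ b) (k : ℕ) : FundEquiv φ (dilationSum φ b k) := by
  refine ⟨1, k + 1, one_pos, by positivity, fun x hx => ⟨?_, ?_⟩⟩
  · have hterms : ∀ j ∈ range (k + 1), 0 ≤ φ (b ^ j * x) / b ^ j := fun j _ =>
      (hφ.dilate (one_le_pow₀ hb)).1 x hx |>.le
    simpa [dilationSum] using single_le_sum hterms (mem_range.2 k.succ_pos)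
  · calc dilationSum φ b k x ≤ ∑ _j ∈ range (k + 1), φ x :=
          sum_le_sum fun j _ => (div_le_iff₀' (by positivity)).2
            (hφ.apply_mul_le (one_le_pow₀ hb) hx)
      _ = (k + 1) * φ x := by simp

theorem dilationSum_mul_left (hb : b ≠ 0) (k : ℕ) (x : ℝ) :
    dilationSum φ b k (b * x) =
      b * (dilationSum φ b k x - φ x + φ (b ^ (k + 1) * x) / b ^ (k + 1)) := by
  have hshift : dilationSum φ b k (b * x) =
      b * ∑ j ∈ range (k + 1), φ (b ^ (j + 1) * x) / b ^ (j + 1) := by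
    rw [dilationSum, mul_sum]
    refine sum_congr rfl fun j _ => ?_
    rw [← mul_assoc, ← pow_succ, pow_succ _ j]
    field_simp
  have hsucc' := sum_range_succ' (fun j => φ (b ^ j * x) / b ^ j) (k + 1)
  have hsucc := sum_range_succ (fun j => φ (b ^ j * x) / b ^ j) (k + 1)
  simp only [pow_zero, one_mul, div_one] at hsucc'
  rw [hshift, dilationSum]
  congr 1
  linarith

theorem add_mul_le_dilationSum {c x : ℝ} {k : ℕ}
    (h : ∀ j ∈ range k, c * φ x ≤ φ (b ^ (j + 1) * x) / b ^ (j + 1)) :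
    (1 + k * c) * φ x ≤ dilationSum φ b k x := by
  have hsum := sum_le_sum h
  rw [sum_const, card_range, nsmul_eq_mul] at hsum
  rw [dilationSum, sum_range_succ']
  simp only [pow_zero, one_mul, div_one]
  linarith

theorem one_sub_div_le_dilationSum_ratio (hb : 0 < b) {c x : ℝ} {k : ℕ} (hc0 : 0 ≤ c)
    (hc1 : c ≤ 1) (hφx : 0 < φ x)
    (h : ∀ j ∈ range (k + 1), c * φ x ≤ φ (b ^ (j + 1) * x) / b ^ (j + 1)) :
    1 - (1 - c) / (1 + k * c) ≤ dilationSum φ b k (b * x) / (b * dilationSum φ b k x) := by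
  have hkc : 0 < 1 + k * c := by positivity
  have hlow : (1 + k * c) * φ x ≤ dilationSum φ b k x :=
    add_mul_le_dilationSum fun j hj => h j (range_subset_range.2 k.le_succ hj)
  have hψ : 0 < dilationSum φ b k x := lt_of_lt_of_le (by positivity) hlow
  have hlast := h k (self_mem_range_succ k)
  have hscaled : (1 - c) * φ x ≤ (1 - c) / (1 + k * c) * dilationSum φ b k x := by
    rw [div_mul_eq_mul_div, le_div_iff₀ hkc]
    nlinarith
  rw [dilationSum_mul_left hb.ne', mul_div_mul_left _ _ hb.ne', le_div_iff₀ hψ]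
  linarith

end dilationSum

theorem exists_nat_lt_one_sub_div {c ε : ℝ} (hc : 0 < c) (hε : 0 < ε) :
    ∃ k : ℕ, 1 / (1 + ε) < 1 - (1 - c) / (1 + k * c) := by
  have hlim : Tendsto (fun k : ℕ => 1 - (1 - c) / (1 + k * c)) atTop (nhds 1) := by
    simpa using tendsto_const_nhds.sub <| tendsto_const_nhds.div_atTop <|
      tendsto_atTop_add_const_left _ 1 (tendsto_natCast_atTop_atTop.atTop_mul_const hc)
  exact (hlim.eventually (lt_mem_nhds ((div_lt_one (by linarith)).2 (by linarith)))).exists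

/-- if `φ` is a fundamental function with `δ(φ) > 0`, then for every
`ε > 0` and every positive integer `m` there is a fundamental function `ψ` equivalent to
`φ` with `δ_ψ(m) > 1/(1+ε)`. -/
theorem exists_equiv_fundamentalFunction_large_delta (φ : ℝ → ℝ)
    (hφ : IsFundamentalFunction φ) (hδ : 0 < deltaParam φ)
    (ε : ℝ) (hε : 0 < ε) (m : ℕ) (hm : 1 ≤ m) :
    ∃ ψ : ℝ → ℝ, IsFundamentalFunction ψ ∧ FundEquiv φ ψ ∧
      1 / (1 + ε) < deltaFn ψ (m : ℝ) := by
  obtain ⟨c, hc0, hc1, hcδ⟩ : ∃ c : ℝ, 0 < c ∧ c ≤ 1 ∧ c < deltaParam φ :=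
    ⟨min (deltaParam φ / 2) 1, by positivity, min_le_right _ _,
      (min_le_left _ _).trans_lt (half_lt_self hδ)⟩
  obtain ⟨k, hk⟩ := exists_nat_lt_one_sub_div hc0 hε
  have hM : (1 : ℝ) ≤ m := by exact_mod_cast hm
  have hψ := isFundamentalFunction_dilationSum hφ hM k
  refine ⟨dilationSum φ m k, hψ, fundEquiv_dilationSum hφ hM k, hk.trans_le (hψ.le_deltaFn hM ?_)⟩
  have hterms : ∀ j ∈ range (k + 1),
      ∀ᶠ x in atTop, c * φ x < φ ((m : ℝ) ^ (j + 1) * x) / (m : ℝ) ^ (j + 1) := fun j _ =>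
    hφ.eventually_lt_apply_mul_div (one_le_pow₀ hM)
      (hcδ.trans_le (deltaParam_le_deltaFn hδ (one_le_pow₀ hM)))
  filter_upwards [(eventually_all_finset _).2 hterms, eventually_ge_atTop 1] with x hx hx1
  exact one_sub_div_le_dilationSum_ratio (by positivity) hc0.le hc1 (hφ.1 x hx1)
    fun j hj => (hx j hj).le
end

section
/- Let φ be a fundamental function, m ≥ 2 an integer and 0 < δ < 1. If δ_φ(m²) > δ, then there exists a fundamental function ψ equivalent to φ (indeed with δ φ(x) ≤ ψ(x) ≤ m² φ(x) for all x) such that δ_ψ(m) ≥ √δ. -/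
open scoped BigOperators

/-- if `φ` is a fundamental function, `m ≥ 2` is an integer, `0 < δ < 1`
and `δ_φ(m²) > δ`, then there is a fundamental function `ψ` with
`δ φ(x) ≤ ψ(x) ≤ m² φ(x)` for all `x ≥ 1` (so `ψ` is equivalent to `φ`) and
`δ_ψ(m) ≥ √δ`. -/
theorem exists_equiv_fundamentalFunction_sqrt_delta (φ : ℝ → ℝ)
    (hφ : IsFundamentalFunction φ) (m : ℕ) (hm : 2 ≤ m)
    (δ : ℝ) (hδ0 : 0 < δ) (hδ1 : δ < 1)
    (h : δ < deltaFn φ ((m : ℝ) ^ 2)) :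
    ∃ ψ : ℝ → ℝ, IsFundamentalFunction ψ ∧
      (∀ x : ℝ, 1 ≤ x → δ * φ x ≤ ψ x ∧ ψ x ≤ (m : ℝ) ^ 2 * φ x) ∧
      Real.sqrt δ ≤ deltaFn ψ (m : ℝ) := by
  obtain ⟨hpos, hinc, hdec⟩ := hφ
  have hm1 : (1:ℝ) ≤ (m:ℝ) := by exact_mod_cast Nat.one_le_of_lt hm
  have hm0 : (0:ℝ) < (m:ℝ) := lt_of_lt_of_le one_pos hm1
  have hm2 : (1:ℝ) ≤ (m:ℝ)^2 := by nlinarith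
  have hmx : ∀ x : ℝ, 1 ≤ x → 1 ≤ (m:ℝ) * x := fun x hx => by nlinarith
  have hm2x : ∀ x : ℝ, 1 ≤ x → 1 ≤ (m:ℝ)^2 * x := fun x hx => by nlinarith
  set ψ : ℝ → ℝ := fun x => Real.sqrt (φ x * φ ((m:ℝ) * x)) with hψdef
  have hψpos : ∀ x : ℝ, 1 ≤ x → 0 < ψ x := fun x hx =>
    Real.sqrt_pos.mpr (mul_pos (hpos x hx) (hpos _ (hmx x hx)))
  -- φ(m x) ≤ m φ(x) for x ≥ 1
  have hsub : ∀ x : ℝ, 1 ≤ x → φ ((m:ℝ) * x) ≤ (m:ℝ) * φ x := by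
    intro x hx
    have hd := hdec x ((m:ℝ) * x) hx (by nlinarith)
    have hx0 : (0:ℝ) < x := lt_of_lt_of_le one_pos hx
    rw [div_le_div_iff₀ (by positivity) hx0] at hd
    nlinarith
  have hsub2 : ∀ x : ℝ, 1 ≤ x → φ ((m:ℝ)^2 * x) ≤ (m:ℝ)^2 * φ x := by
    intro x hx
    have hd := hdec x ((m:ℝ)^2 * x) hx (le_mul_of_one_le_left (by linarith) hm2)
    have hx0 : (0:ℝ) < x := lt_of_lt_of_le one_pos hx
    rw [div_le_div_iff₀ (by positivity) hx0] at hd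
    nlinarith
  have hfund : IsFundamentalFunction ψ := by
    refine ⟨hψpos, ?_, ?_⟩
    · intro x y hx hxy
      have hy : 1 ≤ y := hx.trans hxy
      exact Real.sqrt_le_sqrt (mul_le_mul (hinc x y hx hxy)
        (hinc _ _ (hmx x hx) (by nlinarith)) (hpos _ (hmx x hx)).le (hpos y hy).le)
    · intro x y hx hxy
      have hy : 1 ≤ y := hx.trans hxy
      have hx0 : (0:ℝ) < x := lt_of_lt_of_le one_pos hx
      have hy0 : (0:ℝ) < y := lt_of_lt_of_le one_pos hy
      rw [div_le_div_iff₀ hy0 hx0]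
      have hA := hdec x y hx hxy
      rw [div_le_div_iff₀ hy0 hx0] at hA
      have hB := hdec ((m:ℝ)*x) ((m:ℝ)*y) (hmx x hx) (by nlinarith)
      rw [div_le_div_iff₀ (by positivity) (by positivity)] at hB
      have hB' : φ ((m:ℝ)*y) * x ≤ φ ((m:ℝ)*x) * y := by nlinarith
      have hφx := hpos x hx
      have hφy := hpos y hy
      have hφmx := hpos _ (hmx x hx)
      have hφmy := hpos _ (hmx y hy)
      have h1 : ψ y * x = Real.sqrt ((φ y * φ ((m:ℝ)*y)) * x^2) := by
        rw [Real.sqrt_mul (mul_pos hφy hφmy).le, Real.sqrt_sq hx0.le]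
      have h2 : ψ x * y = Real.sqrt ((φ x * φ ((m:ℝ)*x)) * y^2) := by
        rw [Real.sqrt_mul (mul_pos hφx hφmx).le, Real.sqrt_sq hy0.le]
      rw [h1, h2]
      apply Real.sqrt_le_sqrt
      have key := mul_le_mul hA hB' (mul_nonneg hφmy.le hx0.le)
        (mul_nonneg hφx.le hy0.le)
      nlinarith [key]
  have hbounds : ∀ x : ℝ, 1 ≤ x → δ * φ x ≤ ψ x ∧ ψ x ≤ (m:ℝ)^2 * φ x := by
    intro x hx
    have hφx := hpos x hx
    have hφmx := hpos _ (hmx x hx)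
    constructor
    · have h1 : φ x ≤ ψ x := by
        have : φ x = Real.sqrt ((φ x)^2) := (Real.sqrt_sq hφx.le).symm
        rw [this]
        apply Real.sqrt_le_sqrt
        nlinarith [hinc x ((m:ℝ)*x) hx (by nlinarith)]
      nlinarith
    · have h2 : ψ x ≤ Real.sqrt (((m:ℝ) * φ x)^2) := by
        apply Real.sqrt_le_sqrt
        nlinarith [mul_le_mul_of_nonneg_left (hsub x hx) hφx.le,
          mul_nonneg (by linarith : (0:ℝ) ≤ (m:ℝ) - 1)
            (mul_nonneg hm0.le (sq_nonneg (φ x)))]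
      rw [Real.sqrt_sq (mul_nonneg hm0.le hφx.le)] at h2
      nlinarith [h2, mul_nonneg (by nlinarith : (0:ℝ) ≤ (m:ℝ)^2 - (m:ℝ)) hφx.le]
  refine ⟨ψ, hfund, hbounds, ?_⟩
  -- the liminf estimate
  set f : ℝ → ℝ := fun x => φ ((m:ℝ)^2 * x) / ((m:ℝ)^2 * φ x) with hfdef
  have hbddf : Filter.IsBoundedUnder (· ≥ ·) Filter.atTop f :=
    ⟨0, by
      rw [Filter.eventually_map]
      filter_upwards [Filter.eventually_ge_atTop (1:ℝ)] with x hx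
      have := hpos x hx
      have := hpos _ (hm2x x hx)
      positivity⟩
  have hev : ∀ᶠ x in Filter.atTop, δ < f x :=
    Filter.eventually_lt_of_lt_liminf h hbddf
  have hgf : ∀ᶠ x in Filter.atTop,
      ψ ((m:ℝ) * x) / ((m:ℝ) * ψ x) = Real.sqrt (f x) := by
    filter_upwards [Filter.eventually_ge_atTop (1:ℝ)] with x hx
    have ha := hpos x hx
    have hb := hpos _ (hmx x hx)
    have hc := hpos _ (hm2x x hx)
    have hmm : (m:ℝ) * ((m:ℝ) * x) = (m:ℝ)^2 * x := by ring
    have hψm : ψ ((m:ℝ) * x) = Real.sqrt (φ ((m:ℝ)*x)) * Real.sqrt (φ ((m:ℝ)^2*x)) := by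
      rw [hψdef]
      simp only [hmm]
      exact Real.sqrt_mul hb.le _
    have hψx : ψ x = Real.sqrt (φ x) * Real.sqrt (φ ((m:ℝ)*x)) :=
      Real.sqrt_mul ha.le _
    have hrhs : Real.sqrt (f x) = Real.sqrt (φ ((m:ℝ)^2*x)) / ((m:ℝ) * Real.sqrt (φ x)) := by
      rw [hfdef]
      simp only
      rw [Real.sqrt_div hc.le, Real.sqrt_mul (by positivity), Real.sqrt_sq hm0.le]
    rw [hψm, hψx, hrhs]
    have h1 : Real.sqrt (φ x) ≠ 0 := by positivity
    have h2 : Real.sqrt (φ ((m:ℝ)*x)) ≠ 0 := by positivity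
    field_simp
  have hf1 : ∀ᶠ x in Filter.atTop, f x ≤ 1 := by
    filter_upwards [Filter.eventually_ge_atTop (1:ℝ)] with x hx
    have := hpos x hx
    rw [hfdef]
    simp only
    rw [div_le_one (by positivity)]
    exact hsub2 x hx
  have hcob : Filter.IsCoboundedUnder (· ≥ ·) Filter.atTop
      (fun x : ℝ => ψ ((m:ℝ) * x) / ((m:ℝ) * ψ x)) := by
    refine Filter.isCoboundedUnder_ge_of_eventually_le Filter.atTop (x := 1) ?_
    filter_upwards [hgf, hf1] with x h1 h2
    rw [h1]
    calc Real.sqrt (f x) ≤ Real.sqrt 1 := Real.sqrt_le_sqrt h2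
    _ = 1 := Real.sqrt_one
  refine Filter.le_liminf_of_le hcob ?_
  filter_upwards [hgf, hev] with x h1 h2
  rw [h1]
  exact Real.sqrt_le_sqrt h2.le
end

section
/- Let φ be a fundamental function. Then there exists a concave fundamental function ψ: [1,∞) → (0,∞) such that φ(x) ≤ ψ(x) ≤ 2φ(x) for all x ∈ [1,∞). Moreover, δ_ψ(y) ≥ δ_φ(y) for all y ∈ [1,∞). -/
open scoped BigOperators

/-!
Take `ψ(x) = inf_{t ≥ 1} φ(t) (1 + x/t)`. As an infimum of increasing affine functions of `x`
with nonnegative intercept, `ψ` is concave, increasing and has `ψ(x)/x` decreasing; `t = x`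
gives `ψ ≤ 2φ`, and quasi-concavity of `φ` gives `φ ≤ ψ`. Both `φ(x)/x` and `ψ(x)/x` decrease
to the same limit `c`. Given `0 < b < δ_φ(y)`, pick `T` with `φ(yt) ≥ b y φ(t)` for `t ≥ T`. In
`ψ(yx)` the terms with `s = yt ≥ yT` are then at least `b y ψ(x)`, while those with `s < yT` are
at least `(φ(yT)/(yT)) y x`, which beats `b y ψ(x)` for large `x` because `b c < φ(yT)/(yT)`.
-/

open Filter Set Topology

/-- Meaningful for `x ≥ 0` only: for `x < 0` the family may be unbounded below, and `⨅` is
then `0`. -/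
noncomputable def concaveMajorant (φ : ℝ → ℝ) (x : ℝ) : ℝ :=
  ⨅ t : Ici (1 : ℝ), φ t * (1 + x / t)

section ConcaveMajorant

variable {φ : ℝ → ℝ} {x : ℝ}

theorem concaveMajorant_le (hφ : ∀ t, 1 ≤ t → 0 ≤ φ t) (hx : 0 ≤ x) {t : ℝ} (ht : 1 ≤ t) :
    concaveMajorant φ x ≤ φ t * (1 + x / t) := by
  refine ciInf_le ⟨0, ?_⟩ (⟨t, ht⟩ : Ici (1 : ℝ))
  rintro _ ⟨⟨s, hs⟩, rfl⟩
  have := hφ s hs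
  have : (0 : ℝ) < s := zero_lt_one.trans_le hs
  positivity

theorem le_concaveMajorant_of_forall {c : ℝ} (h : ∀ t, 1 ≤ t → c ≤ φ t * (1 + x / t)) :
    c ≤ concaveMajorant φ x :=
  le_ciInf fun t => h t t.2

theorem concaveMajorant_le_two_mul (hφ : ∀ t, 1 ≤ t → 0 ≤ φ t) (hx : 1 ≤ x) :
    concaveMajorant φ x ≤ 2 * φ x := by
  have h := concaveMajorant_le hφ (zero_le_one.trans hx) hx
  rwa [div_self (zero_lt_one.trans_le hx).ne', one_add_one_eq_two, mul_comm] at h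

theorem concaveOn_concaveMajorant (hφ : ∀ t, 1 ≤ t → 0 ≤ φ t) :
    ConcaveOn ℝ (Ici 0) (concaveMajorant φ) := by
  refine ⟨convex_Ici 0, fun x hx y hy a b ha hb hab => le_concaveMajorant_of_forall fun t ht => ?_⟩
  calc a • concaveMajorant φ x + b • concaveMajorant φ y
      ≤ a * (φ t * (1 + x / t)) + b * (φ t * (1 + y / t)) := by
        simp only [smul_eq_mul]
        gcongr
        · exact concaveMajorant_le hφ hx ht
        · exact concaveMajorant_le hφ hy ht
    _ = φ t * (1 + (a • x + b • y) / t) := by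
        simp only [smul_eq_mul]
        linear_combination φ t * hab

end ConcaveMajorant

namespace IsFundamentalFunction

variable {φ : ℝ → ℝ} {x y c : ℝ}

theorem nonneg (hφ : IsFundamentalFunction φ) : ∀ t, 1 ≤ t → 0 ≤ φ t :=
  fun t ht => (hφ.1 t ht).le

theorem le_concaveMajorant (hφ : IsFundamentalFunction φ) (hx : 1 ≤ x) :
    φ x ≤ concaveMajorant φ x := by
  refine le_concaveMajorant_of_forall fun t ht => ?_
  have ht0 : 0 < t := zero_lt_one.trans_le ht
  have hφt := hφ.1 t ht
  rcases le_total t x with htx | hxt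
  · have h := hφ.2.2 t x ht htx
    rw [div_le_div_iff₀ (ht0.trans_le htx) ht0] at h
    have : φ x ≤ φ t * x / t := by rw [le_div_iff₀ ht0]; linarith
    rw [mul_add, mul_one, mul_div_assoc']
    linarith
  · have := hφ.2.1 x t hx hxt
    have : 0 ≤ φ t * (x / t) := by positivity
    linarith

theorem isFundamentalFunction_concaveMajorant (hφ : IsFundamentalFunction φ) :
    IsFundamentalFunction (concaveMajorant φ) := by
  refine ⟨fun x hx => (hφ.1 x hx).trans_le (hφ.le_concaveMajorant hx), fun x y hx hxy => ?_,
    fun x y hx hxy => ?_⟩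
  · refine le_concaveMajorant_of_forall fun t ht => ?_
    have := hφ.1 t ht
    have : 0 < t := zero_lt_one.trans_le ht
    refine (concaveMajorant_le hφ.nonneg (zero_le_one.trans hx) ht).trans ?_
    gcongr
  · have hx0 : 0 < x := zero_lt_one.trans_le hx
    have hy0 : 0 < y := hx0.trans_le hxy
    suffices h : x / y * concaveMajorant φ y ≤ concaveMajorant φ x by
      rw [div_le_div_iff₀ hy0 hx0, mul_comm]
      rwa [div_mul_eq_mul_div, div_le_iff₀ hy0] at h
    refine le_concaveMajorant_of_forall fun t ht => ?_
    have := hφ.1 t ht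
    have : 0 < t := zero_lt_one.trans_le ht
    calc x / y * concaveMajorant φ y ≤ x / y * (φ t * (1 + y / t)) := by
          gcongr
          exact concaveMajorant_le hφ.nonneg hy0.le ht
      _ = φ t * (x / y + x / t) := by field_simp
      _ ≤ φ t * (1 + x / t) := by
          gcongr
          exact div_le_one_of_le₀ hxy hy0.le

theorem exists_tendsto_div (hφ : IsFundamentalFunction φ) :
    ∃ c, Tendsto (fun x => φ x / x) atTop (𝓝 c) := by
  set f : ℝ → ℝ := fun x => φ (max x 1) / max x 1
  have hf : Antitone f := fun x y hxy =>
    hφ.2.2 _ _ (le_max_right x 1) (max_le_max_right 1 hxy)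
  have hbdd : BddBelow (range f) := by
    refine ⟨0, ?_⟩
    rintro _ ⟨x, rfl⟩
    have := hφ.1 _ (le_max_right x 1)
    have : (0 : ℝ) < max x 1 := zero_lt_one.trans_le (le_max_right x 1)
    positivity
  refine ⟨_, (tendsto_atTop_ciInf hf hbdd).congr' ?_⟩
  filter_upwards [eventually_ge_atTop 1] with x hx
  simp only [f, max_eq_left hx]

theorem le_div_of_tendsto (hφ : IsFundamentalFunction φ)
    (hc : Tendsto (fun x => φ x / x) atTop (𝓝 c)) {t : ℝ} (ht : 1 ≤ t) : c ≤ φ t / t :=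
  le_of_tendsto hc ((eventually_ge_atTop t).mono fun x hx => hφ.2.2 t x ht hx)

theorem tendsto_concaveMajorant_div (hφ : IsFundamentalFunction φ)
    (hc : Tendsto (fun x => φ x / x) atTop (𝓝 c)) :
    Tendsto (fun x => concaveMajorant φ x / x) atTop (𝓝 c) := by
  obtain ⟨c', hc'⟩ := hφ.isFundamentalFunction_concaveMajorant.exists_tendsto_div
  have hcc' : c ≤ c' := le_of_tendsto_of_tendsto hc hc' <| by
    filter_upwards [eventually_ge_atTop 1] with x hx
    gcongr
    exact hφ.le_concaveMajorant hx
  have hc't : ∀ t, 1 ≤ t → c' ≤ φ t / t := fun t ht => by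
    have ht0 : 0 < t := zero_lt_one.trans_le ht
    have hlim : Tendsto (fun x => φ t / x + φ t / t) atTop (𝓝 (0 + φ t / t)) :=
      (tendsto_const_nhds.div_atTop tendsto_id).add tendsto_const_nhds
    refine le_of_tendsto_of_tendsto hc' (zero_add (φ t / t) ▸ hlim) ?_
    filter_upwards [eventually_gt_atTop 0] with x hx
    calc concaveMajorant φ x / x ≤ φ t * (1 + x / t) / x := by
          gcongr
          exact concaveMajorant_le hφ.nonneg hx.le ht
      _ = φ t / x + φ t / t := by field_simp
  have hc'c : c' ≤ c := ge_of_tendsto hc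
    ((eventually_ge_atTop 1).mono fun t ht => hc't t ht)
  rwa [le_antisymm hcc' hc'c]

theorem apply_mul_div_le_one (hφ : IsFundamentalFunction φ) (hy : 1 ≤ y) (hx : 1 ≤ x) :
    φ (y * x) / (y * φ x) ≤ 1 := by
  have hx0 : 0 < x := zero_lt_one.trans_le hx
  have h := hφ.2.2 x (y * x) hx (le_mul_of_one_le_left hx0.le hy)
  rw [div_le_div_iff₀ (by positivity) hx0] at h
  have := hφ.1 x hx
  rw [div_le_one (by positivity)]
  nlinarith

theorem apply_mul_div_nonneg (hφ : IsFundamentalFunction φ) (hy : 1 ≤ y) (hx : 1 ≤ x) :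
    0 ≤ φ (y * x) / (y * φ x) :=
  div_nonneg (hφ.nonneg _ (one_le_mul_of_one_le_of_one_le hy hx))
    (mul_nonneg (zero_le_one.trans hy) (hφ.nonneg x hx))

theorem isBoundedUnder_ge_apply_mul_div (hφ : IsFundamentalFunction φ) (hy : 1 ≤ y) :
    IsBoundedUnder (· ≥ ·) atTop (fun x => φ (y * x) / (y * φ x)) :=
  isBoundedUnder_of_eventually_ge <|
    (eventually_ge_atTop 1).mono fun _ hx => hφ.apply_mul_div_nonneg hy hx

theorem isCoboundedUnder_ge_apply_mul_div (hφ : IsFundamentalFunction φ) (hy : 1 ≤ y) :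
    IsCoboundedUnder (· ≥ ·) atTop (fun x => φ (y * x) / (y * φ x)) :=
  isCoboundedUnder_ge_of_eventually_le _ <|
    (eventually_ge_atTop 1).mono fun _ hx => hφ.apply_mul_div_le_one hy hx

theorem deltaFn_nonneg (hφ : IsFundamentalFunction φ) (hy : 1 ≤ y) : 0 ≤ deltaFn φ y :=
  le_liminf_of_le (hφ.isCoboundedUnder_ge_apply_mul_div hy) <|
    (eventually_ge_atTop 1).mono fun _ hx => hφ.apply_mul_div_nonneg hy hx

theorem deltaFn_le_one (hφ : IsFundamentalFunction φ) (hy : 1 ≤ y) : deltaFn φ y ≤ 1 :=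
  liminf_le_of_frequently_le
    ((eventually_ge_atTop 1).mono fun _ hx => hφ.apply_mul_div_le_one hy hx).frequently
    (hφ.isBoundedUnder_ge_apply_mul_div hy)

theorem eventually_mul_le_concaveMajorant_mul (hφ : IsFundamentalFunction φ) (hy : 1 ≤ y)
    {b : ℝ} (hb0 : 0 < b) (hb : b < deltaFn φ y) :
    ∀ᶠ x in atTop, b * (y * concaveMajorant φ x) ≤ concaveMajorant φ (y * x) := by
  have hy0 : 0 < y := zero_lt_one.trans_le hy
  obtain ⟨T, hT1, hT⟩ : ∃ T, 1 ≤ T ∧ ∀ t, T ≤ t → b * (y * φ t) ≤ φ (y * t) := by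
    obtain ⟨T, hT⟩ := eventually_atTop.1
      (eventually_lt_of_lt_liminf hb (hφ.isBoundedUnder_ge_apply_mul_div hy))
    refine ⟨max T 1, le_max_right T 1, fun t ht => ?_⟩
    have ht1 := (le_max_right T 1).trans ht
    have := hφ.1 t ht1
    exact ((lt_div_iff₀ (by positivity)).1 (hT t ((le_max_left T 1).trans ht))).le
  obtain ⟨c, hc⟩ := hφ.exists_tendsto_div
  have hyT : 1 ≤ y * T := one_le_mul_of_one_le_of_one_le hy hT1
  set m := φ (y * T) / (y * T)
  have hm : 0 < m := div_pos (hφ.1 _ hyT) (zero_lt_one.trans_le hyT)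
  have hbc : b * c < m := by
    nlinarith [hφ.le_div_of_tendsto hc hyT, hφ.deltaFn_le_one hy]
  filter_upwards [eventually_ge_atTop 1,
    ((hφ.tendsto_concaveMajorant_div hc).const_mul b).eventually (gt_mem_nhds hbc)]
    with x hx hxm
  have hx0 : 0 < x := zero_lt_one.trans_le hx
  refine le_concaveMajorant_of_forall fun s hs => ?_
  rcases le_or_gt (y * T) s with hsT | hsT
  · obtain ⟨t, rfl⟩ : ∃ t, s = y * t := ⟨s / y, by field_simp⟩
    have ht : T ≤ t := le_of_mul_le_mul_left hsT hy0
    have ht0 : 0 < t := zero_lt_one.trans_le (hT1.trans ht)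
    calc b * (y * concaveMajorant φ x) ≤ b * (y * (φ t * (1 + x / t))) := by
          gcongr
          exact concaveMajorant_le hφ.nonneg hx0.le (hT1.trans ht)
      _ = b * (y * φ t) * (1 + x / t) := by ring
      _ ≤ φ (y * t) * (1 + x / t) := by
          gcongr
          exact hT t ht
      _ = φ (y * t) * (1 + y * x / (y * t)) := by rw [mul_div_mul_left _ _ hy0.ne']
  · have hs0 : 0 < s := zero_lt_one.trans_le hs
    have := hφ.1 s hs
    calc b * (y * concaveMajorant φ x) = b * (concaveMajorant φ x / x) * (y * x) := by
          field_simp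
      _ ≤ m * (y * x) := by gcongr
      _ ≤ φ s / s * (y * x) := by
          gcongr
          exact hφ.2.2 s (y * T) hs hsT.le
      _ = φ s * (y * x / s) := by ring
      _ ≤ φ s * (1 + y * x / s) := by gcongr; linarith

theorem deltaFn_le_deltaFn_concaveMajorant (hφ : IsFundamentalFunction φ) (hy : 1 ≤ y) :
    deltaFn φ y ≤ deltaFn (concaveMajorant φ) y := by
  have hψ := hφ.isFundamentalFunction_concaveMajorant
  refine le_of_forall_lt_imp_le_of_dense fun b hb => ?_
  rcases le_or_gt b 0 with hb0 | hb0
  · exact hb0.trans (hψ.deltaFn_nonneg hy)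
  refine le_liminf_of_le (hψ.isCoboundedUnder_ge_apply_mul_div hy) ?_
  filter_upwards [eventually_ge_atTop 1, hφ.eventually_mul_le_concaveMajorant_mul hy hb0 hb]
    with x hx h
  rwa [le_div_iff₀ (mul_pos (zero_lt_one.trans_le hy) (hψ.1 x hx))]

end IsFundamentalFunction
/-- every fundamental function `φ` admits a concave fundamental function
`ψ` with `φ(x) ≤ ψ(x) ≤ 2φ(x)` for all `x ≥ 1`, and moreover `δ_ψ(y) ≥ δ_φ(y)` for all
`y ≥ 1`. -/
theorem exists_concave_fundamentalFunction (φ : ℝ → ℝ)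
    (hφ : IsFundamentalFunction φ) :
    ∃ ψ : ℝ → ℝ, IsFundamentalFunction ψ ∧ ConcaveOn ℝ (Set.Ici (1:ℝ)) ψ ∧
      (∀ x : ℝ, 1 ≤ x → φ x ≤ ψ x ∧ ψ x ≤ 2 * φ x) ∧
      (∀ y : ℝ, 1 ≤ y → deltaFn φ y ≤ deltaFn ψ y) :=
  ⟨concaveMajorant φ, hφ.isFundamentalFunction_concaveMajorant,
    (concaveOn_concaveMajorant hφ.nonneg).subset (Ici_subset_Ici.2 zero_le_one) (convex_Ici 1),
    fun _ hx => ⟨hφ.le_concaveMajorant hx, concaveMajorant_le_two_mul hφ.nonneg hx⟩,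
    fun _ hy => hφ.deltaFn_le_deltaFn_concaveMajorant hy⟩
end

section
/- Let φ: [1,∞) → (0,∞) be a fundamental function with φ(1) = 1. Then there is a Banach space X with a normalized 1-unconditional Schauder basis (e_i) whose fundamental function agrees with φ on ℕ, i.e., sup_{|A|≤n} ‖Σ_{i∈A} e_i‖ = φ(n) for all n ∈ ℕ. (Concretely, the completion of c_00 under ‖x‖ = max{ ‖x‖_{ℓ∞}, sup_{A∈𝓕} (φ(|A|)/|A|) Σ_{i∈A} |x_i| }, for any family 𝓕 of finite subsets of ℕ containing a set of each cardinality, works with the unit vectors as basis.) -/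
open scoped BigOperators

/-!
Put on `c₀₀` the norm `‖x‖ = sup_A (φ(|A|)/|A|) ∑_{i∈A} |x_i|`. It only sees the moduli of the
coordinates, so the unit vectors are `1`-unconditional; hence the partial-sum projections are
contractions on their (dense) span, and the unit vectors form a Schauder basis of the completion.
For a finite set `B`, the term of index `A` in `‖1_B‖` is `(φ(|A|)/|A|)·|A ∩ B| ≤ φ(|B|)` by
quasi-concavity of `φ`, with equality at `A = B`, so `‖1_B‖ = φ(|B|)`.
-/

open Filter Topology

section SchauderCriterion

variable {X : Type*} [NormedAddCommGroup X] [NormedSpace ℝ X]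
  {e : ℕ → X} {coord : ℕ → X →L[ℝ] ℝ}

noncomputable def partialSumOp (e : ℕ → X) (coord : ℕ → X →L[ℝ] ℝ) (n : ℕ) : X →L[ℝ] X :=
  ∑ i ∈ Finset.range n, (coord i).smulRight (e i)

lemma partialSumOp_apply (n : ℕ) (x : X) :
    partialSumOp e coord n x = ∑ i ∈ Finset.range n, coord i x • e i := by
  simp [partialSumOp]

lemma partialSumOp_apply_basis (biorth : ∀ i j, coord i (e j) = if i = j then 1 else 0)
    (n j : ℕ) : partialSumOp e coord n (e j) = if j < n then e j else 0 := by
  simp [partialSumOp_apply, biorth, ite_smul]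

lemma eventually_partialSumOp_eq_of_mem_span
    (biorth : ∀ i j, coord i (e j) = if i = j then 1 else 0) {x : X}
    (hx : x ∈ Submodule.span ℝ (Set.range e)) :
    ∀ᶠ n in atTop, partialSumOp e coord n x = x := by
  induction hx using Submodule.span_induction with
  | mem _ hx =>
    obtain ⟨j, rfl⟩ := hx
    filter_upwards [eventually_gt_atTop j] with n hn
    rw [partialSumOp_apply_basis biorth, if_pos hn]
  | zero => exact .of_forall fun n => map_zero _
  | add x y _ _ hx hy =>
    filter_upwards [hx, hy] with n hxn hyn
    rw [map_add, hxn, hyn]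
  | smul a x _ hx =>
    filter_upwards [hx] with n hxn
    rw [map_smul, hxn]

lemma norm_partialSumOp_le_of_mem_span
    (biorth : ∀ i j, coord i (e j) = if i = j then 1 else 0) {K : ℝ}
    (hK : IsUnconditionalWith e (fun x => ‖x‖) K) {x : X}
    (hx : x ∈ Submodule.span ℝ (Set.range e)) (n : ℕ) :
    ‖partialSumOp e coord n x‖ ≤ K * ‖x‖ := by
  obtain ⟨N, hN⟩ := (eventually_partialSumOp_eq_of_mem_span biorth hx).exists_forall_of_atTop
  have htrunc : partialSumOp e coord n x =
      ∑ i ∈ Finset.range (max n N), (if i < n then coord i x else 0) • e i := by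
    simp only [ite_smul, zero_smul, ← Finset.sum_filter, partialSumOp_apply]
    congr 1
    ext i
    simp only [Finset.mem_filter, Finset.mem_range]
    omega
  calc ‖partialSumOp e coord n x‖
      ≤ K * ‖∑ i ∈ Finset.range (max n N), coord i x • e i‖ := by
        rw [htrunc]
        exact hK _ _ _ fun i => by split_ifs <;> simp
    _ = K * ‖x‖ := by rw [← partialSumOp_apply, hN _ (le_max_right n N)]

theorem IsSchauderBasis.of_dense_span
    (biorth : ∀ i j, coord i (e j) = if i = j then 1 else 0)
    (hdense : Dense (Submodule.span ℝ (Set.range e) : Set X)) {K : ℝ}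
    (hK : IsUnconditionalWith e (fun x => ‖x‖) K) : IsSchauderBasis e coord := by
  refine ⟨biorth, fun x => ?_⟩
  have hbound : ∀ n x, ‖partialSumOp e coord n x‖ ≤ K * ‖x‖ := fun n =>
    hdense.induction (fun x hx => norm_partialSumOp_le_of_mem_span biorth hK hx n)
      (isClosed_le (by fun_prop) (by fun_prop))
  have hequi : Equicontinuous fun n => ⇑(partialSumOp e coord n) :=
    ((NormedSpace.equicontinuous_TFAE (partialSumOp e coord)).out 3 1).mp
      (show ∃ C, ∀ n x, ‖partialSumOp e coord n x‖ ≤ C * ‖x‖ from ⟨K, hbound⟩)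
  have hconv : ∀ x, Tendsto (fun n => partialSumOp e coord n x) atTop (𝓝 x) :=
    hdense.induction
      (fun x hx => tendsto_const_nhds.congr'
        ((eventually_partialSumOp_eq_of_mem_span biorth hx).mono fun _ h => h.symm))
      (hequi.isClosed_setOfPred_tendsto continuous_id)
  simpa only [partialSumOp_apply] using hconv x

end SchauderCriterion

section LinearIsometry

variable {E F : Type*} [NormedAddCommGroup E] [NormedSpace ℝ E]
  [NormedAddCommGroup F] [NormedSpace ℝ F] (L : E →ₗᵢ[ℝ] F) {v : ℕ → E}

lemma LinearIsometry.norm_sum_smul_map (s : Finset ℕ) (a : ℕ → ℝ) :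
    ‖∑ i ∈ s, a i • L (v i)‖ = ‖∑ i ∈ s, a i • v i‖ := by
  rw [← L.norm_map (∑ i ∈ s, a i • v i), map_sum]
  simp only [map_smul]

lemma IsNormalizedWith.linearIsometry_comp (h : IsNormalizedWith v (fun x => ‖x‖)) :
    IsNormalizedWith (fun i => L (v i)) (fun x => ‖x‖) :=
  fun i => (L.norm_map (v i)).trans (h i)

lemma IsUnconditionalWith.linearIsometry_comp {K : ℝ}
    (h : IsUnconditionalWith v (fun x => ‖x‖) K) :
    IsUnconditionalWith (fun i => L (v i)) (fun x => ‖x‖) K := by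
  intro s a b hab
  simp only [L.norm_sum_smul_map]
  exact h s a b hab

lemma fundFn_linearIsometry_comp :
    fundFn (fun i => L (v i)) (fun x => ‖x‖) = fundFn v (fun x => ‖x‖) := by
  ext n
  simp only [fundFn, ← map_sum, L.norm_map]

end LinearIsometry

section Completion

open UniformSpace

variable {E : Type*} [NormedAddCommGroup E] [NormedSpace ℝ E]
  {v : ℕ → E} {coord : ℕ → E →L[ℝ] ℝ}

theorem IsSchauderBasis.completion
    (biorth : ∀ i j, coord i (v j) = if i = j then 1 else 0)
    (hdense : Dense (Submodule.span ℝ (Set.range v) : Set E)) {K : ℝ}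
    (hK : IsUnconditionalWith v (fun x => ‖x‖) K) :
    IsSchauderBasis (fun i => (v i : Completion E))
      (fun i => (coord i).extend Completion.toComplL) := by
  have hdenseRange : DenseRange (Completion.toComplL : E →L[ℝ] Completion E) := by
    rw [Completion.coe_toComplL]; exact Completion.denseRange_coe
  have hinducing : IsUniformInducing (Completion.toComplL : E →L[ℝ] Completion E) := by
    rw [Completion.coe_toComplL]; exact Completion.isUniformInducing_coe E
  refine .of_dense_span (K := K) (fun i j => ?_) ?_ ?_
  · rw [← Completion.coe_toComplL (𝕜 := ℝ),
      ContinuousLinearMap.extend_eq _ hdenseRange hinducing, biorth]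
  · refine (hdenseRange.dense_image (by fun_prop) hdense).mono ?_
    refine (Submodule.image_span_subset_span
      (Completion.toComplL : E →L[ℝ] Completion E).toLinearMap _).trans ?_
    rw [← Set.range_comp]
    rfl
  · exact hK.linearIsometry_comp Completion.toComplₗᵢ

end Completion

lemma Finsupp.sum_abs_le_sum_support_abs (x : ℕ →₀ ℝ) (A : Finset ℕ) :
    ∑ i ∈ A, |x i| ≤ ∑ i ∈ x.support, |x i| :=
  calc ∑ i ∈ A, |x i| ≤ ∑ i ∈ A ∪ x.support, |x i| :=
        Finset.sum_le_sum_of_subset_of_nonneg Finset.subset_union_left fun _ _ _ => abs_nonneg _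
    _ = ∑ i ∈ x.support, |x i| :=
        (Finset.sum_subset Finset.subset_union_right fun i _ hi => by
          rw [Finsupp.notMem_support_iff.1 hi, abs_zero]).symm

structure MarcinkiewiczWeight where
  toFun : ℕ → ℝ
  nonneg : ∀ k, 0 ≤ toFun k
  le_one : ∀ k, toFun k ≤ 1
  map_one : toFun 1 = 1

namespace MarcinkiewiczWeight

instance : CoeFun MarcinkiewiczWeight fun _ => ℕ → ℝ := ⟨toFun⟩

variable (w : MarcinkiewiczWeight)

noncomputable def norm (x : ℕ →₀ ℝ) : ℝ :=
  ⨆ A : Finset ℕ, w A.card * ∑ i ∈ A, |x i|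

lemma bddAbove_range_weighted_sum (x : ℕ →₀ ℝ) :
    BddAbove (Set.range fun A : Finset ℕ => w A.card * ∑ i ∈ A, |x i|) := by
  refine ⟨∑ i ∈ x.support, |x i|, Set.forall_mem_range.2 fun A => ?_⟩
  have hsum := Finset.sum_nonneg fun i (_ : i ∈ A) => abs_nonneg (x i)
  calc w A.card * ∑ i ∈ A, |x i| ≤ 1 * ∑ i ∈ A, |x i| :=
        mul_le_mul_of_nonneg_right (w.le_one _) hsum
    _ ≤ ∑ i ∈ x.support, |x i| := by rw [one_mul]; exact x.sum_abs_le_sum_support_abs A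

lemma weighted_sum_le_norm (x : ℕ →₀ ℝ) (A : Finset ℕ) :
    w A.card * ∑ i ∈ A, |x i| ≤ w.norm x :=
  le_ciSup (w.bddAbove_range_weighted_sum x) A

lemma abs_apply_le_norm (x : ℕ →₀ ℝ) (i : ℕ) : |x i| ≤ w.norm x := by
  simpa [w.map_one] using w.weighted_sum_le_norm x {i}

lemma norm_mono {x y : ℕ →₀ ℝ} (h : ∀ i, |x i| ≤ |y i|) : w.norm x ≤ w.norm y :=
  ciSup_le fun A => (mul_le_mul_of_nonneg_left (Finset.sum_le_sum fun i _ => h i)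
    (w.nonneg _)).trans (w.weighted_sum_le_norm y A)

lemma norm_add_le (x y : ℕ →₀ ℝ) : w.norm (x + y) ≤ w.norm x + w.norm y := by
  refine ciSup_le fun A => ?_
  calc w A.card * ∑ i ∈ A, |(x + y) i|
      ≤ w A.card * ∑ i ∈ A, |x i| + w A.card * ∑ i ∈ A, |y i| := by
        rw [← mul_add, ← Finset.sum_add_distrib]
        exact mul_le_mul_of_nonneg_left (Finset.sum_le_sum fun i _ => abs_add_le _ _)
          (w.nonneg _)
    _ ≤ w.norm x + w.norm y :=
        add_le_add (w.weighted_sum_le_norm x A) (w.weighted_sum_le_norm y A)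

lemma norm_smul (a : ℝ) (x : ℕ →₀ ℝ) : w.norm (a • x) = |a| * w.norm x := by
  rw [norm, norm, Real.mul_iSup_of_nonneg (abs_nonneg a)]
  congr 1 with A
  simp only [Finsupp.smul_apply, smul_eq_mul, abs_mul, ← Finset.mul_sum]
  ring

lemma norm_zero : w.norm 0 = 0 := by
  simpa using w.norm_smul 0 0

lemma norm_neg (x : ℕ →₀ ℝ) : w.norm (-x) = w.norm x := by
  simpa using w.norm_smul (-1) x

lemma eq_zero_of_norm_eq_zero {x : ℕ →₀ ℝ} (h : w.norm x = 0) : x = 0 := by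
  ext i
  simpa [h] using w.abs_apply_le_norm x i

end MarcinkiewiczWeight

/-- `c₀₀` as a type synonym, so that `w.norm` can be its norm instance. -/
def MarcinkiewiczSeq (_ : MarcinkiewiczWeight) : Type := ℕ →₀ ℝ

namespace MarcinkiewiczSeq

variable {w : MarcinkiewiczWeight}

noncomputable instance : AddCommGroup (MarcinkiewiczSeq w) :=
  inferInstanceAs (AddCommGroup (ℕ →₀ ℝ))

noncomputable instance : Module ℝ (MarcinkiewiczSeq w) :=
  inferInstanceAs (Module ℝ (ℕ →₀ ℝ))

noncomputable def toFinsupp : MarcinkiewiczSeq w ≃ₗ[ℝ] (ℕ →₀ ℝ) :=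
  LinearEquiv.refl ℝ (ℕ →₀ ℝ)

noncomputable instance : NormedAddCommGroup (MarcinkiewiczSeq w) :=
  AddGroupNorm.toNormedAddCommGroup
    { toFun := fun x => w.norm (toFinsupp x)
      map_zero' := by rw [map_zero, w.norm_zero]
      add_le' := fun x y => by rw [map_add]; exact w.norm_add_le _ _
      neg' := fun x => by rw [map_neg, w.norm_neg]
      eq_zero_of_map_eq_zero' := fun x h =>
        toFinsupp.injective ((w.eq_zero_of_norm_eq_zero h).trans (map_zero _).symm) }

lemma norm_def (x : MarcinkiewiczSeq w) : ‖x‖ = w.norm (toFinsupp x) := rfl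

noncomputable instance : NormedSpace ℝ (MarcinkiewiczSeq w) where
  norm_smul_le a x := by rw [norm_def, norm_def, map_smul, w.norm_smul, Real.norm_eq_abs]

variable (w) in
noncomputable def unitVec (i : ℕ) : MarcinkiewiczSeq w :=
  toFinsupp.symm (Finsupp.single i 1)

variable (w) in
noncomputable def coord (i : ℕ) : MarcinkiewiczSeq w →L[ℝ] ℝ :=
  LinearMap.mkContinuous ((Finsupp.lapply i).comp toFinsupp.toLinearMap) 1 fun x => by
    simpa [norm_def] using w.abs_apply_le_norm (toFinsupp x) i

lemma coord_unitVec (i j : ℕ) : coord w i (unitVec w j) = if i = j then 1 else 0 := by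
  simp [coord, unitVec, Finsupp.single_apply, eq_comm]

lemma dense_span_unitVec :
    Dense (Submodule.span ℝ (Set.range (unitVec w)) : Set (MarcinkiewiczSeq w)) := by
  have : Submodule.span ℝ (Set.range (unitVec w)) = ⊤ :=
    (Finsupp.basisSingleOne.map toFinsupp.symm).span_eq
  simp [this]

lemma toFinsupp_sum_smul_unitVec_apply (s : Finset ℕ) (a : ℕ → ℝ) (j : ℕ) :
    toFinsupp (∑ i ∈ s, a i • unitVec w i) j = if j ∈ s then a j else 0 := by
  simp [unitVec, Finsupp.single_apply]

lemma toFinsupp_sum_unitVec_apply (s : Finset ℕ) (j : ℕ) :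
    toFinsupp (∑ i ∈ s, unitVec w i) j = if j ∈ s then 1 else 0 := by
  simpa using toFinsupp_sum_smul_unitVec_apply (w := w) s 1 j

theorem isUnconditionalWith_unitVec : IsUnconditionalWith (unitVec w) (fun x => ‖x‖) 1 := by
  intro s a b hab
  dsimp only
  rw [one_mul, norm_def, norm_def]
  refine w.norm_mono fun j => ?_
  simp only [toFinsupp_sum_smul_unitVec_apply]
  split_ifs
  exacts [hab j, le_rfl]

theorem isNormalizedWith_unitVec : IsNormalizedWith (unitVec w) (fun x => ‖x‖) := by
  intro i
  have hsingle : toFinsupp (unitVec w i) = Finsupp.single i 1 := rfl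
  dsimp only
  rw [norm_def, hsingle]
  refine le_antisymm (ciSup_le fun A => ?_)
    (by simpa using w.abs_apply_le_norm (Finsupp.single i 1) i)
  refine mul_le_one₀ (w.le_one _) (Finset.sum_nonneg fun _ _ => abs_nonneg _) ?_
  simpa using (Finsupp.single i (1 : ℝ)).sum_abs_le_sum_support_abs A

end MarcinkiewiczSeq

namespace IsFundamentalFunction

open MarcinkiewiczSeq

variable {φ : ℝ → ℝ}

lemma div_mul_le (hφ : IsFundamentalFunction φ) {k b m : ℝ} (hk : 1 ≤ k) (hb : 1 ≤ b)
    (hm : 0 ≤ m) (hmk : m ≤ k) (hmb : m ≤ b) : φ k / k * m ≤ φ b := by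
  have hφk := hφ.1 k hk
  have hφb := hφ.1 b hb
  rcases le_total k b with hkb | hbk
  · calc φ k / k * m ≤ φ k / k * k := by gcongr
      _ = φ k := div_mul_cancel₀ _ (by positivity)
      _ ≤ φ b := hφ.2.1 k b hk hkb
  · calc φ k / k * m ≤ φ b / b * m := mul_le_mul_of_nonneg_right (hφ.2.2 b k hb hbk) hm
      _ ≤ φ b / b * b := by gcongr
      _ = φ b := div_mul_cancel₀ _ (by positivity)

noncomputable def marcinkiewiczWeight (hφ : IsFundamentalFunction φ) (hφ1 : φ 1 = 1) :
    MarcinkiewiczWeight where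
  toFun k := φ k / k
  nonneg k := by
    rcases k.eq_zero_or_pos with rfl | hk
    · simp
    · exact div_nonneg (hφ.1 k (by exact_mod_cast hk)).le k.cast_nonneg
  le_one k := by
    rcases k.eq_zero_or_pos with rfl | hk
    · simp
    · simpa [hφ1] using hφ.2.2 1 k le_rfl (by exact_mod_cast hk)
  map_one := by simp [hφ1]

@[simp]
lemma marcinkiewiczWeight_apply (hφ : IsFundamentalFunction φ) (hφ1 : φ 1 = 1) (k : ℕ) :
    hφ.marcinkiewiczWeight hφ1 k = φ k / k :=
  rfl

lemma norm_sum_unitVec (hφ : IsFundamentalFunction φ) (hφ1 : φ 1 = 1) {B : Finset ℕ}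
    (hB : B.Nonempty) : ‖∑ i ∈ B, unitVec (hφ.marcinkiewiczWeight hφ1) i‖ = φ B.card := by
  have hB1 : (1 : ℝ) ≤ B.card := by exact_mod_cast hB.card_pos
  have hsum : ∀ A : Finset ℕ,
      ∑ i ∈ A, |toFinsupp (∑ i ∈ B, unitVec (hφ.marcinkiewiczWeight hφ1) i) i| =
        (A ∩ B).card := by
    intro A
    simp only [toFinsupp_sum_unitVec_apply, apply_ite, abs_one, abs_zero]
    rw [Finset.sum_boole, Finset.filter_mem_eq_inter]
  rw [norm_def]
  refine le_antisymm (ciSup_le fun A => ?_) ?_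
  · rw [hsum]
    rcases A.eq_empty_or_nonempty with rfl | hA
    · simpa using (hφ.1 _ hB1).le
    · exact hφ.div_mul_le (by exact_mod_cast hA.card_pos) hB1 (Nat.cast_nonneg _)
        (by exact_mod_cast Finset.card_le_card Finset.inter_subset_left)
        (by exact_mod_cast Finset.card_le_card Finset.inter_subset_right)
  · have h := (hφ.marcinkiewiczWeight hφ1).weighted_sum_le_norm
      (toFinsupp (∑ i ∈ B, unitVec (hφ.marcinkiewiczWeight hφ1) i)) B
    rwa [hsum, Finset.inter_self, marcinkiewiczWeight_apply,
      div_mul_cancel₀ _ (by positivity)] at h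

theorem fundFn_unitVec (hφ : IsFundamentalFunction φ) (hφ1 : φ 1 = 1) {n : ℕ} (hn : 1 ≤ n) :
    fundFn (unitVec (hφ.marcinkiewiczWeight hφ1)) (fun x => ‖x‖) n = φ n := by
  refine IsGreatest.csSup_eq ⟨⟨Finset.range n, by simp, ?_⟩, ?_⟩
  · dsimp only
    rw [hφ.norm_sum_unitVec hφ1 (Finset.nonempty_range_iff.2 (by omega)), Finset.card_range]
  · rintro r ⟨A, hA, rfl⟩
    rcases A.eq_empty_or_nonempty with rfl | hA'
    · simpa using (hφ.1 n (by exact_mod_cast hn)).le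
    · dsimp only
      rw [hφ.norm_sum_unitVec hφ1 hA']
      exact hφ.2.1 _ _ (by exact_mod_cast hA'.card_pos) (by exact_mod_cast hA)

end IsFundamentalFunction

open UniformSpace MarcinkiewiczSeq in
/-- for every fundamental function `φ` with `φ(1) = 1` there is a Banach
space with a normalized `1`-unconditional Schauder basis whose fundamental function
agrees with `φ` on `ℕ`. -/
theorem exists_space_with_given_fundamental_function (φ : ℝ → ℝ)
    (hφ : IsFundamentalFunction φ) (hφ1 : φ 1 = 1) :
    ∃ (X : Type) (_ : NormedAddCommGroup X) (_ : NormedSpace ℝ X) (_ : CompleteSpace X)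
      (e : ℕ → X) (coord : ℕ → X →L[ℝ] ℝ),
      IsSchauderBasis e coord ∧
      IsNormalizedWith e (fun x => ‖x‖) ∧
      IsUnconditionalWith e (fun x => ‖x‖) 1 ∧
      ∀ n : ℕ, 1 ≤ n → fundFn e (fun x => ‖x‖) n = φ (n : ℝ) := by
  set w := hφ.marcinkiewiczWeight hφ1
  refine ⟨Completion (MarcinkiewiczSeq w), inferInstance, inferInstance, inferInstance,
    fun i => Completion.toComplₗᵢ (unitVec w i), fun i => (coord w i).extend Completion.toComplL,
    .completion coord_unitVec dense_span_unitVec isUnconditionalWith_unitVec,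
    isNormalizedWith_unitVec.linearIsometry_comp _,
    isUnconditionalWith_unitVec.linearIsometry_comp _, fun n hn => ?_⟩
  rw [fundFn_linearIsometry_comp, hφ.fundFn_unitVec hφ1 hn]
end
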